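/- arXiv:1109.4309 — 5 statements merged into one kernel-verified Lean document; each statement's English description precedes it below -/
import Mathlib

section
/- Let A be a graded commutative unital algebra over a field of characteristic 0 and f : A → A a homogeneous linear map. Then f is a second-order differential operator with f(1) = 0 if and only if f satisfies the seven-term identity: f(abc) + f(a)bc + (−1)^{|a||b|} f(b)ac + (−1)^{|c|(|a|+|b|)} f(c)ab = f(ab)c + (−1)^{|a|(|b|+|c|)} f(bc)a + (−1)^{|b||c|} f(ac)b for all homogeneous a, b, c ∈ A. -/
set_option linter.unusedSectionVars false

/-!
STATEMENT 2 (part of Theorem 3.4 of the paper):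
Let `A` be a graded commutative unital algebra over a field of characteristic 0 and
`f : A → A` a homogeneous linear map.  Then `f` is a second-order differential operator
with `f(1) = 0` if and only if `f` satisfies the seven-term identity.
-/

variable {K : Type} [Field K] [CharZero K]
variable {A : Type} [Ring A] [Algebra K A]

def IsGradedComm (𝒜 : ℤ → Submodule K A) : Prop :=
  DirectSum.IsInternal 𝒜 ∧ (1 : A) ∈ 𝒜 0 ∧
    (∀ i j : ℤ, ∀ a ∈ 𝒜 i, ∀ b ∈ 𝒜 j, a * b ∈ 𝒜 (i + j)) ∧
    (∀ i j : ℤ, ∀ a ∈ 𝒜 i, ∀ b ∈ 𝒜 j, a * b = ((i * j).negOnePow : ℤ) • (b * a))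

def HasDeg (𝒜 : ℤ → Submodule K A) (f : A →ₗ[K] A) (r : ℤ) : Prop :=
  ∀ i : ℤ, ∀ a ∈ 𝒜 i, f a ∈ 𝒜 (i + r)

/-- Graded commutator `[f, a·] = f ∘ (a·) - (-1)^{|f||a|} (a·) ∘ f` of a degree `r` operator
with left multiplication by a degree `i` element `a`. -/
def gcomm (r i : ℤ) (f : A →ₗ[K] A) (a : A) : A →ₗ[K] A :=
  f ∘ₗ LinearMap.mulLeft K a - ((r * i).negOnePow : ℤ) • (LinearMap.mulLeft K a ∘ₗ f)

/-- `f` (homogeneous of degree `r`) is a differential operator of order `≤ k`: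
recursively, `Diff_k = {f : [f, a·] ∈ Diff_{k-1} for all homogeneous a}`, with
`Diff_0 = {f : [f, a·] = 0}` (i.e. `Diff_{-1} = 0`). -/
def IsDiff (𝒜 : ℤ → Submodule K A) (r : ℤ) : ℕ → (A →ₗ[K] A) → Prop
  | 0, f => ∀ i : ℤ, ∀ a ∈ 𝒜 i, gcomm r i f a = 0
  | k + 1, f => ∀ i : ℤ, ∀ a ∈ 𝒜 i, IsDiff 𝒜 (r + i) k (gcomm r i f a)

/-- The seven-term identity for `f` on homogeneous elements. -/
def SevenTerm (𝒜 : ℤ → Submodule K A) (f : A →ₗ[K] A) : Prop :=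
  ∀ i j k : ℤ, ∀ a ∈ 𝒜 i, ∀ b ∈ 𝒜 j, ∀ c ∈ 𝒜 k,
    f (a * b * c) + f a * b * c + ((i * j).negOnePow : ℤ) • (f b * a * c)
        + ((k * (i + j)).negOnePow : ℤ) • (f c * (a * b))
      = f (a * b) * c + ((i * (j + k)).negOnePow : ℤ) • (f (b * c) * a)
        + ((j * k).negOnePow : ℤ) • (f (a * c) * b)

lemma gcomm_apply (r i : ℤ) (f : A →ₗ[K] A) (a x : A) :
    gcomm r i f a x = f (a * x) - ((r * i).negOnePow : ℤ) • (a * f x) := by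
  simp only [gcomm, LinearMap.sub_apply, LinearMap.smul_apply, LinearMap.comp_apply,
    LinearMap.mulLeft_apply]

lemma npow_smul_smul {M : Type} [AddCommGroup M] (m n p : ℤ) (x : M)
    (h : Even (m + n - p)) :
    ((m.negOnePow : ℤ)) • ((n.negOnePow : ℤ)) • x = ((p.negOnePow : ℤ)) • x := by
  rw [smul_smul, ← Units.val_mul, ← Int.negOnePow_add,
    (Int.negOnePow_eq_iff _ _).mpr h]

lemma npow4 {M : Type} [AddCommGroup M] (m n q s p : ℤ) (x : M)
    (h : Even (m + n + q + s - p)) :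
    ((m.negOnePow : ℤ)) • ((n.negOnePow : ℤ)) • ((q.negOnePow : ℤ)) • ((s.negOnePow : ℤ)) • x
      = ((p.negOnePow : ℤ)) • x := by
  obtain ⟨t, ht⟩ := h
  rw [npow_smul_smul q s (q + s) x ⟨0, by ring⟩,
    npow_smul_smul n (q + s) (n + q + s) x ⟨0, by ring⟩,
    npow_smul_smul m (n + q + s) p x ⟨t, by linarith⟩]

lemma npow5 {M : Type} [AddCommGroup M] (m n q s u p : ℤ) (x : M)
    (h : Even (m + n + q + s + u - p)) :
    ((m.negOnePow : ℤ)) • ((n.negOnePow : ℤ)) • ((q.negOnePow : ℤ)) • ((s.negOnePow : ℤ)) •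
        ((u.negOnePow : ℤ)) • x = ((p.negOnePow : ℤ)) • x := by
  obtain ⟨t, ht⟩ := h
  rw [npow4 n q s u (n + q + s + u) x ⟨0, by ring⟩,
    npow_smul_smul m (n + q + s + u) p x ⟨t, by linarith⟩]

lemma diff0_of_ptwise (𝒜 : ℤ → Submodule K A)
    (hInt : DirectSum.IsInternal 𝒜)
    (hmul : ∀ i j : ℤ, ∀ a ∈ 𝒜 i, ∀ b ∈ 𝒜 j, a * b ∈ 𝒜 (i + j))
    (g : A →ₗ[K] A) (s : ℤ)
    (hg : ∀ m : ℤ, ∀ x ∈ 𝒜 m, g x = ((s * m).negOnePow : ℤ) • (x * g 1)) :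
    ∀ k : ℤ, ∀ c ∈ 𝒜 k, gcomm s k g c = 0 := by
  intro k c hc
  ext x
  rw [LinearMap.zero_apply, gcomm_apply]
  have htop : x ∈ ⨆ n, 𝒜 n := by rw [hInt.submodule_iSup_eq_top]; trivial
  refine Submodule.iSup_induction 𝒜
    (motive := fun x => g (c * x) - ((s * k).negOnePow : ℤ) • (c * g x) = 0) htop ?_ ?_ ?_
  · intro m x hx
    rw [hg (k + m) (c * x) (hmul k m c hc x hx), hg m x hx, mul_smul_comm,
      npow_smul_smul (s * k) (s * m) (s * (k + m)) _ ⟨0, by ring⟩, mul_assoc, sub_self]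
  · simp
  · intro x y hx hy
    rw [mul_add, map_add, map_add, mul_add, smul_add,
      show g (c * x) + g (c * y)
          - (((s * k).negOnePow : ℤ) • (c * g x) + ((s * k).negOnePow : ℤ) • (c * g y))
        = (g (c * x) - ((s * k).negOnePow : ℤ) • (c * g x))
          + (g (c * y) - ((s * k).negOnePow : ℤ) • (c * g y)) by abel, hx, hy, add_zero]

lemma bridge (𝒜 : ℤ → Submodule K A)
    (hmul : ∀ i j : ℤ, ∀ a ∈ 𝒜 i, ∀ b ∈ 𝒜 j, a * b ∈ 𝒜 (i + j))
    (hcomm : ∀ i j : ℤ, ∀ a ∈ 𝒜 i, ∀ b ∈ 𝒜 j, a * b = ((i * j).negOnePow : ℤ) • (b * a))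
    (f : A →ₗ[K] A) (r : ℤ) (hf : HasDeg 𝒜 f r) (hf1 : f 1 = 0)
    (i j k : ℤ) (a : A) (ha : a ∈ 𝒜 i) (b : A) (hb : b ∈ 𝒜 j) (c : A) (hc : c ∈ 𝒜 k) :
    (f (a * (b * c)) - ((r * i).negOnePow : ℤ) • (a * f (b * c))
        - (((r + i) * j).negOnePow : ℤ) • (b * f (a * c))
        + (((r + i) * j).negOnePow : ℤ) • (((r * i).negOnePow : ℤ) • (b * (a * f c))))
      - (((r + i + j) * k).negOnePow : ℤ) • (c *
          (f (a * b) - ((r * i).negOnePow : ℤ) • (a * f b)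
            - (((r + i) * j).negOnePow : ℤ) • (b * f a)
            + (((r + i) * j).negOnePow : ℤ) • (((r * i).negOnePow : ℤ) • (b * (a * f 1)))))
    =
    (f (a * b * c) + f a * b * c + ((i * j).negOnePow : ℤ) • (f b * a * c)
        + ((k * (i + j)).negOnePow : ℤ) • (f c * (a * b)))
      - (f (a * b) * c + ((i * (j + k)).negOnePow : ℤ) • (f (b * c) * a)
        + ((j * k).negOnePow : ℤ) • (f (a * c) * b)) := by
  have hfa := hf i a ha
  have hfb := hf j b hb
  have hfc := hf k c hc
  have hfbc := hf (j + k) (b * c) (hmul j k b hb c hc)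
  have hfac := hf (i + k) (a * c) (hmul i k a ha c hc)
  have hfab := hf (i + j) (a * b) (hmul i j a ha b hb)
  have T1 : ((r * i).negOnePow : ℤ) • (a * f (b * c))
      = ((i * (j + k)).negOnePow : ℤ) • (f (b * c) * a) := by
    rw [hcomm i (j + k + r) a ha (f (b * c)) hfbc]
    exact npow_smul_smul (r * i) (i * (j + k + r)) (i * (j + k)) _ ⟨r * i, by ring⟩
  have T2 : (((r + i) * j).negOnePow : ℤ) • (b * f (a * c))
      = ((j * k).negOnePow : ℤ) • (f (a * c) * b) := by
    rw [hcomm j (i + k + r) b hb (f (a * c)) hfac]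
    exact npow_smul_smul ((r + i) * j) (j * (i + k + r)) (j * k) _ ⟨r * j + i * j, by ring⟩
  have T3 : (((r + i) * j).negOnePow : ℤ) • (((r * i).negOnePow : ℤ) • (b * (a * f c)))
      = ((k * (i + j)).negOnePow : ℤ) • (f c * (a * b)) := by
    conv_lhs => rw [hcomm i (k + r) a ha (f c) hfc, mul_smul_comm, ← mul_assoc,
      hcomm j (k + r) b hb (f c) hfc, smul_mul_assoc, mul_assoc,
      hcomm j i b hb a ha, mul_smul_comm]
    exact npow5 ((r + i) * j) (r * i) (i * (k + r)) (j * (k + r)) (j * i) (k * (i + j)) _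
      ⟨r * j + i * j + r * i, by ring⟩
  have T4 : (((r + i + j) * k).negOnePow : ℤ) • (c * f (a * b)) = f (a * b) * c := by
    rw [hcomm k (i + j + r) c hc (f (a * b)) hfab]
    simpa using npow_smul_smul ((r + i + j) * k) (k * (i + j + r)) 0 (f (a * b) * c)
      ⟨r * k + i * k + j * k, by ring⟩
  have T5 : (((r + i + j) * k).negOnePow : ℤ) • (((r * i).negOnePow : ℤ) • (c * (a * f b)))
      = ((i * j).negOnePow : ℤ) • (f b * a * c) := by
    conv_lhs => rw [hcomm i (j + r) a ha (f b) hfb, mul_smul_comm,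
      hcomm k (j + r + i) c hc (f b * a) (hmul (j + r) i (f b) hfb a ha)]
    exact npow4 ((r + i + j) * k) (r * i) (i * (j + r)) (k * (j + r + i)) (i * j) _
      ⟨r * k + i * k + j * k + r * i, by ring⟩
  have T6 : (((r + i + j) * k).negOnePow : ℤ) •
        ((((r + i) * j).negOnePow : ℤ) • (c * (b * f a))) = f a * b * c := by
    conv_lhs => rw [hcomm j (i + r) b hb (f a) hfa, mul_smul_comm,
      hcomm k (i + r + j) c hc (f a * b) (hmul (i + r) j (f a) hfa b hb)]
    simpa using npow4 ((r + i + j) * k) ((r + i) * j) (j * (i + r)) (k * (i + r + j)) 0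
      (f a * b * c) ⟨r * k + i * k + j * k + r * j + i * j, by ring⟩
  rw [hf1]
  simp only [mul_zero, smul_zero, add_zero]
  rw [show a * (b * c) = a * b * c from (mul_assoc a b c).symm]
  simp only [mul_sub, mul_smul_comm, smul_sub]
  rw [T1, T2, T3, T4, T5, T6]
  module

/-- `f ∈ Diff₂(A)` and `f(1) = 0` iff `f` satisfies the seven-term identity. -/
theorem diff2_and_one_eq_zero_iff_sevenTerm
    (𝒜 : ℤ → Submodule K A) (hA : IsGradedComm 𝒜)
    (f : A →ₗ[K] A) (r : ℤ) (hf : HasDeg 𝒜 f r) :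
    (IsDiff 𝒜 r 2 f ∧ f 1 = 0) ↔ SevenTerm 𝒜 f := by
  obtain ⟨hInt, h1, hmul, hcomm⟩ := hA
  constructor
  · rintro ⟨hd, hf1⟩ i j k a ha b hb c hc
    have key : gcomm (r + i + j) k (gcomm (r + i) j (gcomm r i f a) b) c = 0 :=
      hd i a ha j b hb k c hc
    have key1 := LinearMap.congr_fun key 1
    simp only [LinearMap.zero_apply, gcomm_apply, mul_one, hf1, mul_zero, smul_zero,
      sub_zero, mul_sub, mul_add, mul_smul_comm] at key1
    have hb1 := bridge 𝒜 hmul hcomm f r hf hf1 i j k a ha b hb c hc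
    rw [hf1] at hb1
    simp only [mul_zero, smul_zero, add_zero, mul_sub, mul_smul_comm] at hb1
    have h0 : (f (a * b * c) + f a * b * c + ((i * j).negOnePow : ℤ) • (f b * a * c)
        + ((k * (i + j)).negOnePow : ℤ) • (f c * (a * b)))
      - (f (a * b) * c + ((i * (j + k)).negOnePow : ℤ) • (f (b * c) * a)
        + ((j * k).negOnePow : ℤ) • (f (a * c) * b)) = 0 := by
      rw [← hb1]
      linear_combination (norm := module) key1
    exact sub_eq_zero.mp h0
  · intro hst
    have hf1 : f 1 = 0 := by
      have h := hst 0 0 0 1 h1 1 h1 1 h1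
      simp only [mul_one, one_mul, mul_zero, Int.negOnePow_zero, Units.val_one,
        one_smul, zero_add] at h
      have h2 : f 1 + (f 1 + f 1 + f 1) = 0 + (f 1 + f 1 + f 1) := by
        rw [zero_add]; linear_combination (norm := abel) h
      exact add_right_cancel h2
    refine ⟨?_, hf1⟩
    intro i a ha j b hb k c hc
    refine diff0_of_ptwise 𝒜 hInt hmul _ (r + i + j) ?_ k c hc
    intro m y hy
    have hb1 := bridge 𝒜 hmul hcomm f r hf hf1 i j m a ha b hb y hy
    rw [hf1] at hb1
    simp only [mul_zero, smul_zero, add_zero, mul_sub, mul_smul_comm] at hb1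
    have hst1 := hst i j m a ha b hb y hy
    simp only [gcomm_apply, mul_one, hf1, mul_zero, smul_zero, sub_zero,
      mul_sub, mul_add, mul_smul_comm]
    linear_combination (norm := module) hb1 + hst1
end

section
/- Let A be a graded commutative unital algebra over a field of characteristic 0 and f : A → A a homogeneous linear map. Then f satisfies the seven-term identity if and only if [f, μ₂] = [[f, μ₁], μ₁] in the graded Lie algebra of coderivations of the reduced symmetric coalgebra of A. -/
/-!
STATEMENT 4 (part of Theorem 3.4 of the paper):
The seven-term identity for a homogeneous linear map `f` is equivalent to the identity
`[f, μ₂] = [[f, μ₁], μ₁]` in the graded Lie algebra `D(A) ≅ Coder(S̄(A))` of coderivations of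
the reduced symmetric coalgebra of `A`.

Both sides of `[f, μ₂] = [[f, μ₁], μ₁]` are coderivations determined by graded symmetric
trilinear maps; the identity is expressed below by evaluating both sides on homogeneous
elements `a, b, c` of degrees `i, j, k`:
`[f, μ₂](a,b,c) = f(abc) - f(a)bc - (-1)^{|f||a|} a f(b) c - (-1)^{|f|(|a|+|b|)} ab f(c)` and
`[[f,μ₁],μ₁](a,b,c) = Φ(ab,c) + (-1)^{|b||c|}Φ(ac,b) + (-1)^{|a|(|b|+|c|)}Φ(bc,a)
  - Φ(a,b)c - (-1)^{|b||c|}Φ(a,c)b - (-1)^{|a|(|b|+|c|)}Φ(b,c)a`,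
where `Φ = [f, μ₁]`, `Φ(x,y) = f(xy) - f(x)y - (-1)^{|f||x|} x f(y)`.
-/

variable {K : Type} [Field K] [CharZero K]
variable {A : Type} [Ring A] [Algebra K A]

/-- The component of the coderivation `[f, μ₁]`:
`Φ(a,b) = f(ab) - f(a)b - (-1)^{|f||a|} a f(b)` for `a` of degree `i`. -/
def Phi (r : ℤ) (f : A →ₗ[K] A) (i : ℤ) (a b : A) : A :=
  f (a * b) - f a * b - ((i * r).negOnePow : ℤ) • (a * f b)

set_option maxHeartbeats 4000000 in
/-- Seven-term identity ⟺ `[f, μ₂] = [[f, μ₁], μ₁]` (componentwise). -/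
theorem sevenTerm_iff_bracket_mu2
    (𝒜 : ℤ → Submodule K A) (hA : IsGradedComm 𝒜)
    (f : A →ₗ[K] A) (r : ℤ) (hf : HasDeg 𝒜 f r) :
    SevenTerm 𝒜 f ↔
      (∀ i j k : ℤ, ∀ a ∈ 𝒜 i, ∀ b ∈ 𝒜 j, ∀ c ∈ 𝒜 k,
        f (a * b * c) - f a * b * c - ((r * i).negOnePow : ℤ) • (a * f b * c)
            - ((r * (i + j)).negOnePow : ℤ) • (a * b * f c)
          = Phi r f (i + j) (a * b) c + ((j * k).negOnePow : ℤ) • Phi r f (i + k) (a * c) b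
              + ((i * (j + k)).negOnePow : ℤ) • Phi r f (j + k) (b * c) a
            - Phi r f i a b * c - ((j * k).negOnePow : ℤ) • (Phi r f i a c * b)
            - ((i * (j + k)).negOnePow : ℤ) • (Phi r f j b c * a)) := by
  obtain ⟨-, -, hmul, hcomm⟩ := hA
  unfold SevenTerm
  refine forall_congr' fun i => forall_congr' fun j => forall_congr' fun k =>
    forall_congr' fun a => imp_congr_right fun ha =>
    forall_congr' fun b => imp_congr_right fun hb =>
    forall_congr' fun c => imp_congr_right fun hc => ?_
  have hfa := hf i a ha
  have hfb := hf j b hb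
  have hfc := hf k c hc
  -- atom normalization lemmas
  have e1 : f (a * c * b) = ((k * j).negOnePow : ℤ) • f (a * b * c) := by
    rw [mul_assoc, hcomm k j c hc b hb, mul_smul_comm, ← mul_assoc, map_zsmul]
  have e2 : f (b * c * a) = (((j + k) * i).negOnePow : ℤ) • f (a * b * c) := by
    rw [hcomm (j + k) i (b * c) (hmul j k b hb c hc) a ha, map_zsmul, ← mul_assoc]
  have e3 : a * c * f b = ((k * (j + r)).negOnePow : ℤ) • (a * f b * c) := by
    rw [mul_assoc, hcomm k (j + r) c hc (f b) hfb, mul_smul_comm, ← mul_assoc]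
  have e4 : b * c * f a = (((j + k) * (i + r)).negOnePow : ℤ) • (f a * b * c) := by
    rw [hcomm (j + k) (i + r) (b * c) (hmul j k b hb c hc) (f a) hfa, ← mul_assoc]
  have e5 : f a * c * b = ((k * j).negOnePow : ℤ) • (f a * b * c) := by
    rw [mul_assoc, hcomm k j c hc b hb, mul_smul_comm, ← mul_assoc]
  have e6 : a * f c * b = (((k + r) * j).negOnePow : ℤ) • (a * b * f c) := by
    rw [mul_assoc, hcomm (k + r) j (f c) hfc b hb, mul_smul_comm, ← mul_assoc]
  have e7 : f b * c * a = (((j + r + k) * i).negOnePow : ℤ) • (a * f b * c) := by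
    rw [hcomm (j + r + k) i (f b * c) (hmul (j + r) k (f b) hfb c hc) a ha, ← mul_assoc]
  have e8 : b * f c * a = (((j + (k + r)) * i).negOnePow : ℤ) • (a * b * f c) := by
    rw [hcomm (j + (k + r)) i (b * f c) (hmul j (k + r) b hb (f c) hfc) a ha, ← mul_assoc]
  have e9 : f b * a * c = (((j + r) * i).negOnePow : ℤ) • (a * f b * c) := by
    rw [hcomm (j + r) i (f b) hfb a ha, smul_mul_assoc]
  have e10 : f c * (a * b) = (((k + r) * (i + j)).negOnePow : ℤ) • (a * b * f c) := by
    rw [hcomm (k + r) (i + j) (f c) hfc (a * b) (hmul i j a ha b hb)]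
  -- decomposition of signs into the six basic signs
  have D1 : ∀ m n : ℤ, m = n → m.negOnePow = n.negOnePow := fun _ _ h => by rw [h]
  have D2 : ∀ m n p : ℤ, m = n + p → m.negOnePow = n.negOnePow * p.negOnePow :=
    fun m n p h => by rw [h, Int.negOnePow_add]
  have D3 : ∀ m n p q : ℤ, m = n + p + q →
      m.negOnePow = n.negOnePow * p.negOnePow * q.negOnePow :=
    fun m n p q h => by rw [h, Int.negOnePow_add, Int.negOnePow_add]
  have D4 : ∀ m n p q s : ℤ, m = n + p + q + s →
      m.negOnePow = n.negOnePow * p.negOnePow * q.negOnePow * s.negOnePow :=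
    fun m n p q s h => by rw [h, Int.negOnePow_add, Int.negOnePow_add, Int.negOnePow_add]
  have d1 : (r * i).negOnePow = (i * r).negOnePow := D1 _ _ (by ring)
  have d2 : (r * (i + j)).negOnePow = (i * r).negOnePow * (j * r).negOnePow :=
    D2 _ _ _ (by ring)
  have d3 : (i * (j + k)).negOnePow = (i * j).negOnePow * (i * k).negOnePow :=
    D2 _ _ _ (by ring)
  have d4 : ((i + j) * r).negOnePow = (i * r).negOnePow * (j * r).negOnePow :=
    D2 _ _ _ (by ring)
  have d5 : ((i + k) * r).negOnePow = (i * r).negOnePow * (k * r).negOnePow :=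
    D2 _ _ _ (by ring)
  have d6 : ((j + k) * r).negOnePow = (j * r).negOnePow * (k * r).negOnePow :=
    D2 _ _ _ (by ring)
  have d7 : (k * (i + j)).negOnePow = (i * k).negOnePow * (j * k).negOnePow :=
    D2 _ _ _ (by ring)
  have d8 : (k * j).negOnePow = (j * k).negOnePow := D1 _ _ (by ring)
  have d9 : ((j + k) * i).negOnePow = (i * j).negOnePow * (i * k).negOnePow :=
    D2 _ _ _ (by ring)
  have d10 : (k * (j + r)).negOnePow = (j * k).negOnePow * (k * r).negOnePow :=
    D2 _ _ _ (by ring)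
  have d11 : ((j + k) * (i + r)).negOnePow =
      (i * j).negOnePow * (i * k).negOnePow * (j * r).negOnePow * (k * r).negOnePow :=
    D4 _ _ _ _ _ (by ring)
  have d12 : ((k + r) * j).negOnePow = (j * k).negOnePow * (j * r).negOnePow :=
    D2 _ _ _ (by ring)
  have d13 : ((j + r + k) * i).negOnePow =
      (i * j).negOnePow * (i * r).negOnePow * (i * k).negOnePow :=
    D3 _ _ _ _ (by ring)
  have d14 : ((j + (k + r)) * i).negOnePow =
      (i * j).negOnePow * (i * k).negOnePow * (i * r).negOnePow :=
    D3 _ _ _ _ (by ring)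
  have d15 : ((j + r) * i).negOnePow = (i * j).negOnePow * (i * r).negOnePow :=
    D2 _ _ _ (by ring)
  have d16 : ((k + r) * (i + j)).negOnePow =
      (i * k).negOnePow * (j * k).negOnePow * (i * r).negOnePow * (j * r).negOnePow :=
    D4 _ _ _ _ _ (by ring)
  have key :
      (f (a * b * c) - f a * b * c - ((r * i).negOnePow : ℤ) • (a * f b * c)
            - ((r * (i + j)).negOnePow : ℤ) • (a * b * f c))
          - (Phi r f (i + j) (a * b) c + ((j * k).negOnePow : ℤ) • Phi r f (i + k) (a * c) b
              + ((i * (j + k)).negOnePow : ℤ) • Phi r f (j + k) (b * c) a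
            - Phi r f i a b * c - ((j * k).negOnePow : ℤ) • (Phi r f i a c * b)
            - ((i * (j + k)).negOnePow : ℤ) • (Phi r f j b c * a))
        = (-2 : ℤ) •
          ((f (a * b * c) + f a * b * c + ((i * j).negOnePow : ℤ) • (f b * a * c)
              + ((k * (i + j)).negOnePow : ℤ) • (f c * (a * b)))
            - (f (a * b) * c + ((i * (j + k)).negOnePow : ℤ) • (f (b * c) * a)
              + ((j * k).negOnePow : ℤ) • (f (a * c) * b))) := by
    simp only [Phi, sub_mul, smul_mul_assoc, smul_sub, smul_add]
    rw [e1, e2, e3, e4, e5, e6, e7, e8, e9, e10]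
    simp only [d1, d2, d3, d4, d5, d6, d7, d8, d9, d10, d11, d12, d13, d14, d15, d16]
    rcases Int.units_eq_one_or ((i * j).negOnePow) with h1 | h1 <;>
    rcases Int.units_eq_one_or ((i * k).negOnePow) with h2 | h2 <;>
    rcases Int.units_eq_one_or ((j * k).negOnePow) with h3 | h3 <;>
    rcases Int.units_eq_one_or ((i * r).negOnePow) with h4 | h4 <;>
    rcases Int.units_eq_one_or ((j * r).negOnePow) with h5 | h5 <;>
    rcases Int.units_eq_one_or ((k * r).negOnePow) with h6 | h6 <;>
    · simp only [h1, h2, h3, h4, h5, h6, one_mul, mul_one, mul_neg, neg_mul, neg_neg,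
        Units.val_one, Units.val_neg, Int.cast_one, one_smul, neg_smul, smul_neg, neg_neg]
      abel
  constructor
  · intro hs
    have h0 : (f (a * b * c) - f a * b * c - ((r * i).negOnePow : ℤ) • (a * f b * c)
            - ((r * (i + j)).negOnePow : ℤ) • (a * b * f c))
          - (Phi r f (i + j) (a * b) c + ((j * k).negOnePow : ℤ) • Phi r f (i + k) (a * c) b
              + ((i * (j + k)).negOnePow : ℤ) • Phi r f (j + k) (b * c) a
            - Phi r f i a b * c - ((j * k).negOnePow : ℤ) • (Phi r f i a c * b)
            - ((i * (j + k)).negOnePow : ℤ) • (Phi r f j b c * a)) = 0 := by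
      rw [key, hs, sub_self, smul_zero]
    exact sub_eq_zero.mp h0
  · intro hb2
    have h2 : (-2 : ℤ) •
          ((f (a * b * c) + f a * b * c + ((i * j).negOnePow : ℤ) • (f b * a * c)
              + ((k * (i + j)).negOnePow : ℤ) • (f c * (a * b)))
            - (f (a * b) * c + ((i * (j + k)).negOnePow : ℤ) • (f (b * c) * a)
              + ((j * k).negOnePow : ℤ) • (f (a * c) * b))) = 0 := by
      rw [← key, hb2, sub_self]
    have h3 : ((-2 : ℤ) : K) •
          ((f (a * b * c) + f a * b * c + ((i * j).negOnePow : ℤ) • (f b * a * c)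
              + ((k * (i + j)).negOnePow : ℤ) • (f c * (a * b)))
            - (f (a * b) * c + ((i * (j + k)).negOnePow : ℤ) • (f (b * c) * a)
              + ((j * k).negOnePow : ℤ) • (f (a * c) * b))) = 0 := by
      rw [Int.cast_smul_eq_zsmul]; exact h2
    rcases smul_eq_zero.mp h3 with h | h
    · exact absurd h (by norm_num)
    · exact sub_eq_zero.mp h
end

section
/- Let V be a graded vector space over a field of characteristic 0, d a differential on V viewed as a degree-1 coderivation of S̄(V), ξ a degree-1 coderivation solving the Maurer–Cartan equation δξ + ½[ξ,ξ] = 0 (where δ = [d, −]), and R a degree-zero coderivation in D_{>0}(V). Then e^R (d + ξ) e^{−R} = d + e^R ∗ ξ, where e^R ∗ ξ = ξ + Σ_{n≥0} (ad_R)ⁿ/(n+1)! ([R,ξ] + [R,d]) is the gauge action. -/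
/-!
STATEMENT 9:
Gauge conjugation formula `e^R (d + ξ) e^{-R} = d + e^R ∗ ξ`, with
`e^R ∗ ξ = ξ + Σ_{n≥0} (ad_R)ⁿ/(n+1)! ([R,ξ] + [R,d])`.

Setting: `W` models the reduced symmetric coalgebra `S̄(V) = ⊕_{i≥1} ⊙ⁱV`, with its word-length
filtration `W₀ = 0 ⊆ W₁ ⊆ W₂ ⊆ ⋯`, `⋃ Wₙ = W`.  The coderivations `d` and `ξ` (degree 1,
`ξ ∈ D(V)` solving Maurer–Cartan, `δξ + ½[ξ,ξ] = 0`, i.e. `dξ + ξd + ξξ = 0`) preserve the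
filtration, while the degree-zero coderivation `R ∈ D_{>0}(V)` strictly lowers it; hence all the
exponential and gauge series are pointwise finite sums, and the identity is stated through
their stabilized partial sums.  (`d`, `ξ` are odd and `R` is even, so `[d,ξ] = dξ + ξd`,
`½[ξ,ξ] = ξξ`, and `ad_R x = Rx - xR`.)
-/

variable {K : Type} [Field K] [CharZero K]

set_option linter.unusedSectionVars false in
/-- Expansion of the iterated commutator `ad_R^n B` as a binomial-type sum. -/
lemma ad_pow_expand {W : Type} [AddCommGroup W] [Module K W] (R B : Module.End K W) (n : ℕ) :
    (fun T => R * T - T * R)^[n] B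
      = ∑ k ∈ Finset.range (n + 1),
          (((-1 : K) ^ (n - k)) * (n.choose k : K)) • (R ^ k * B * R ^ (n - k)) := by
  set L : Module.End K (Module.End K W) := LinearMap.mulLeft K R with hLdef
  set Rr : Module.End K (Module.End K W) := LinearMap.mulRight K R with hRrdef
  have h1 : (fun T : Module.End K W => R * T - T * R) = ⇑(L - Rr) := by
    funext T; simp [hLdef, hRrdef]
  have hLpow : ∀ (k : ℕ) (C : Module.End K W), (L ^ k) C = R ^ k * C := by
    intro k
    induction k with
    | zero => intro C; simp
    | succ k ih =>
        intro C
        rw [pow_succ', Module.End.mul_apply, ih]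
        simp [hLdef, pow_succ', mul_assoc]
  have hRpow : ∀ (j : ℕ) (C : Module.End K W),
      ((-Rr) ^ j) C = ((-1 : K) ^ j) • (C * R ^ j) := by
    intro j
    induction j with
    | zero => intro C; simp
    | succ j ih =>
        intro C
        rw [pow_succ', Module.End.mul_apply, ih, map_smul, LinearMap.neg_apply, hRrdef]
        simp only [LinearMap.mulRight_apply]
        rw [pow_succ (-1 : K), pow_succ R, ← mul_assoc]
        rw [smul_neg, ← neg_smul, mul_comm ((-1:K)^j) (-1 : K)]
        rw [mul_smul, neg_one_smul]
        exact neg_smul _ _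
  have hc : Commute L (-Rr) := by
    show L * -Rr = -Rr * L
    refine LinearMap.ext fun C => ?_
    simp [hLdef, hRrdef, Module.End.mul_apply, mul_assoc]
  rw [h1, ← Module.End.pow_apply, sub_eq_add_neg, hc.add_pow, LinearMap.sum_apply]
  refine Finset.sum_congr rfl fun k hk => ?_
  rw [Module.End.mul_apply, Module.End.mul_apply, Module.End.natCast_apply,
    map_nsmul, hRpow, hLpow]
  rw [smul_comm, ← Nat.cast_smul_eq_nsmul K, smul_smul, mul_smul_comm]
  rw [← mul_assoc]


/-- `e^R (d + ξ) e^{-R} = d + e^R ∗ ξ` (pointwise, via stabilized partial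
sums of the exponential and gauge series). -/
theorem gauge_conjugation_formula
    {W : Type} [AddCommGroup W] [Module K W]
    (Wf : ℕ → Submodule K W) (hmono : Monotone Wf) (h0 : Wf 0 = ⊥)
    (hexh : (⨆ n, Wf n) = ⊤)
    (d ξ R : Module.End K W)
    (hd : ∀ n : ℕ, ∀ w ∈ Wf n, d w ∈ Wf n)
    (hξ : ∀ n : ℕ, ∀ w ∈ Wf n, ξ w ∈ Wf n)
    (hR : ∀ n : ℕ, ∀ w ∈ Wf (n + 1), R w ∈ Wf n)
    (hd2 : d * d = 0)
    (hMC : d * ξ + ξ * d + ξ * ξ = 0) :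
    ∀ w : W, ∃ N : ℕ, ∀ M : ℕ, N ≤ M →
      (∑ n ∈ Finset.range M, ((n.factorial : K)⁻¹) • R ^ n)
          ((d + ξ) ((∑ n ∈ Finset.range M, (((n.factorial : K)⁻¹) * (-1 : K) ^ n) • R ^ n) w))
        = d w + ξ w +
          (∑ n ∈ Finset.range M, (((n + 1).factorial : K)⁻¹) •
            ((fun T => R * T - T * R)^[n] ((R * ξ - ξ * R) + (R * d - d * R)))) w := by
  intro w
  obtain ⟨N0, hwN0⟩ : ∃ n, w ∈ Wf n := by
    have hw : w ∈ (⨆ n, Wf n) := by rw [hexh]; exact Submodule.mem_top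
    exact (Submodule.mem_iSup_of_directed _ hmono.directed_le).1 hw
  refine ⟨N0, fun M hM => ?_⟩
  set A : Module.End K W := d + ξ with hA
  have hApr : ∀ n : ℕ, ∀ v ∈ Wf n, A v ∈ Wf n := by
    intro n v hv
    have : d v + ξ v ∈ Wf n := (Wf n).add_mem (hd n v hv) (hξ n v hv)
    simpa [hA] using this
  have hRit : ∀ (k m : ℕ) (v : W), v ∈ Wf (m + k) → (R ^ k) v ∈ Wf m := by
    intro k
    induction k with
    | zero => intro m v hv; simpa using hv
    | succ k ih =>
        intro m v hv
        rw [pow_succ, Module.End.mul_apply]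
        exact ih m _ (hR (m + k) v (by simpa [Nat.add_assoc] using hv))
  have hkill : ∀ (k m : ℕ) (v : W), v ∈ Wf m → m ≤ k → (R ^ k) v = 0 := by
    intro k m v hv hmk
    have h1 : (R ^ m) v ∈ Wf 0 := hRit m 0 v (by simpa using hv)
    rw [h0, Submodule.mem_bot] at h1
    obtain ⟨t, rfl⟩ : ∃ t, k = t + m := ⟨k - m, (Nat.sub_add_cancel hmk).symm⟩
    rw [pow_add, Module.End.mul_apply, h1, map_zero]
  set F : ℕ → ℕ → W := fun k j => (R ^ k) (A ((R ^ j) w)) with hF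
  have hvan : ∀ k j, N0 ≤ k + j → F k j = 0 := by
    intro k j hkj
    by_cases hj : j ≤ N0
    · have h1 : (R ^ j) w ∈ Wf (N0 - j) := hRit j (N0 - j) w (by rwa [Nat.sub_add_cancel hj])
      exact hkill k (N0 - j) _ (hApr _ _ h1) (by omega)
    · have hz : (R ^ j) w = 0 := hkill j N0 w hwN0 (by omega)
      simp [hF, hz]
  set c : ℕ → ℕ → K := fun k j =>
    (k.factorial : K)⁻¹ * ((j.factorial : K)⁻¹ * (-1 : K) ^ j) with hc
  set g : ℕ → ℕ → W := fun k j => c k j • F k j with hg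
  have hgvan : ∀ k j, N0 ≤ k + j → g k j = 0 := by
    intro k j h; simp [hg, hvan k j h]
  -- LHS computation
  have hLHS : (∑ n ∈ Finset.range M, ((n.factorial : K)⁻¹) • R ^ n)
          (A ((∑ n ∈ Finset.range M, (((n.factorial : K)⁻¹) * (-1 : K) ^ n) • R ^ n) w))
      = ∑ k ∈ Finset.range M, ∑ j ∈ Finset.range M, g k j := by
    rw [LinearMap.sum_apply, LinearMap.sum_apply]
    simp only [LinearMap.smul_apply, map_sum, map_smul, Finset.smul_sum]
    refine Finset.sum_congr rfl fun k _ => Finset.sum_congr rfl fun j _ => ?_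
    simp only [hg, hc, hF]
    rw [smul_smul]
    congr 1
    ring
  -- the iterated bracket
  have hB : (R * ξ - ξ * R) + (R * d - d * R) = R * A - A * R := by
    rw [hA]; noncomm_ring
  have hiter : ∀ n : ℕ, (fun T => R * T - T * R)^[n] ((R * ξ - ξ * R) + (R * d - d * R))
      = (fun T => R * T - T * R)^[n + 1] A := by
    intro n
    rw [Function.iterate_succ_apply]
    congr 1
  -- coefficient identity
  have hcoef : ∀ m k : ℕ, k ≤ m →
      (m.factorial : K)⁻¹ * (((-1 : K) ^ (m - k)) * (m.choose k : K)) = c k (m - k) := by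
    intro m k hkm
    have h1 : (m.choose k : K) * (k.factorial : K) * ((m - k).factorial : K)
        = (m.factorial : K) := by
      exact_mod_cast congrArg (Nat.cast : ℕ → K) (Nat.choose_mul_factorial_mul_factorial hkm)
    have hk0 : (k.factorial : K) ≠ 0 := Nat.cast_ne_zero.2 k.factorial_ne_zero
    have hj0 : ((m - k).factorial : K) ≠ 0 := Nat.cast_ne_zero.2 (m - k).factorial_ne_zero
    have hm0 : (m.factorial : K) ≠ 0 := Nat.cast_ne_zero.2 m.factorial_ne_zero
    rw [hc]
    field_simp
    linear_combination h1
  -- RHS computation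
  have hRHS : d w + ξ w +
        (∑ n ∈ Finset.range M, (((n + 1).factorial : K)⁻¹) •
          ((fun T => R * T - T * R)^[n] ((R * ξ - ξ * R) + (R * d - d * R)))) w
      = ∑ m ∈ Finset.range (M + 1), ∑ k ∈ Finset.range (m + 1), g k (m - k) := by
    rw [Finset.sum_range_succ']
    have h00 : ∑ k ∈ Finset.range (0 + 1), g k (0 - k) = d w + ξ w := by
      simp [hg, hc, hF, hA]
    rw [h00]
    rw [add_comm (∑ i ∈ Finset.range M, ∑ k ∈ Finset.range (i + 1 + 1), g k (i + 1 - k)) _]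
    congr 1
    rw [LinearMap.sum_apply]
    refine Finset.sum_congr rfl fun n _ => ?_
    rw [hiter n, ad_pow_expand, LinearMap.smul_apply, LinearMap.sum_apply, Finset.smul_sum]
    refine Finset.sum_congr rfl fun k hk => ?_
    rw [Finset.mem_range] at hk
    rw [LinearMap.smul_apply, smul_smul, Module.End.mul_apply, Module.End.mul_apply,
      hcoef (n + 1) k (by omega)]
  -- combinatorial rearrangement
  have hcomb : ∑ m ∈ Finset.range (M + 1), ∑ k ∈ Finset.range (m + 1), g k (m - k)
      = ∑ k ∈ Finset.range M, ∑ j ∈ Finset.range M, g k j := by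
    rw [Finset.sum_range_diag_flip]
    have e1 : ∀ m ∈ Finset.range (M + 1),
        ∑ k ∈ Finset.range (M + 1 - m), g m k = ∑ k ∈ Finset.range (M + 1), g m k := by
      intro m hm
      rw [Finset.mem_range] at hm
      refine Finset.sum_subset (Finset.range_subset_range.2 (by omega)) ?_
      intro x hx hnx
      rw [Finset.mem_range] at hx hnx
      exact hgvan m x (by omega)
    rw [Finset.sum_congr rfl e1]
    have e2 : ∀ k, ∑ j ∈ Finset.range M, g k j = ∑ j ∈ Finset.range (M + 1), g k j := by
      intro k
      refine Finset.sum_subset (Finset.range_subset_range.2 (Nat.le_succ M)) ?_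
      intro x hx hnx
      rw [Finset.mem_range] at hx hnx
      exact hgvan k x (by omega)
    have e3 : ∑ k ∈ Finset.range M, ∑ j ∈ Finset.range (M + 1), g k j
        = ∑ k ∈ Finset.range (M + 1), ∑ j ∈ Finset.range (M + 1), g k j := by
      refine Finset.sum_subset (Finset.range_subset_range.2 (Nat.le_succ M)) ?_
      intro x hx hnx
      rw [Finset.mem_range] at hx hnx
      refine Finset.sum_eq_zero fun j _ => hgvan x j (by omega)
    rw [Finset.sum_congr rfl fun k _ => e2 k, e3]
  rw [← hA] at *
  rw [hLHS, hRHS, hcomb]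
end

section
/- Let (A, d) be a differential graded commutative algebra over a field of characteristic 0, i : A → A a quasi-BV operator of even degree −2k, and l = [i, d]. Assume [l, i] is also a quasi-BV operator. Define bilinear operators R(a,b) = i(ab) − i(a)b − a i(b) and Q(a,b) = l(ab) − l(a)b − (−1)^{|a|} a l(b). Then, viewing R and Q as elements of D₁(A[2k]), one has Q = [R, d] and [Q, R] = 0 in the graded Lie algebra D(A[2k]). -/
/-!
STATEMENT 11 (Lemma 4.1 of the paper):
Let `(A, d)` be a DGCA, `i` a quasi-BV operator of even degree `-2k`, `l = [i, d]`, and assume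
that `[l, i]` is also quasi-BV.  Set `R(a,b) = i(ab) - i(a)b - a i(b)` and
`Q(a,b) = l(ab) - l(a)b - (-1)^{|a|} a l(b)`; viewing `R` and `Q` as degree `0` resp. `1`
elements of `D₁(A[2k])`, one has `Q = [R, d]` and `[Q, R] = 0` in `D(A[2k])`.
Both identities are expressed through the components of the corresponding coderivations on
homogeneous elements (the even shift `2k` does not affect Koszul signs).
-/

variable {K : Type} [Field K] [CharZero K]
variable {A : Type} [Ring A] [Algebra K A]

def IsGDer (𝒜 : ℤ → Submodule K A) (r : ℤ) (f : A →ₗ[K] A) : Prop :=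
  ∀ i : ℤ, ∀ a ∈ 𝒜 i, ∀ b : A,
    f (a * b) = f a * b + ((r * i).negOnePow : ℤ) • (a * f b)

def IsQuasiBV (𝒜 : ℤ → Submodule K A) (r : ℤ) (f : A →ₗ[K] A) : Prop :=
  HasDeg 𝒜 f r ∧ IsDiff 𝒜 r 2 f ∧ f 1 = 0

/-- The bilinear operator `R(a,b) = i(ab) - i(a)b - a i(b)` generated by `bi`. -/
def Rop (bi : A →ₗ[K] A) (a b : A) : A := bi (a * b) - bi a * b - a * bi b

/-- The bilinear operator `Q(a,b) = l(ab) - l(a)b - (-1)^{|a|} a l(b)` generated by `l`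
(`i` = degree of `a`). -/
def Qop (l : A →ₗ[K] A) (i : ℤ) (a b : A) : A :=
  l (a * b) - l a * b - (i.negOnePow : ℤ) • (a * l b)

lemma sgn_eq {x y : ℤ} (h : Even (x - y)) : (x.negOnePow : ℤ) = y.negOnePow := by
  rw [(Int.negOnePow_eq_iff x y).2 h]
lemma sgn_add (m n : ℤ) : ((m + n).negOnePow : ℤ) = m.negOnePow * n.negOnePow := by
  rw [Int.negOnePow_add]; push_cast; ring
lemma sgn_sq (n : ℤ) : (n.negOnePow : ℤ) * n.negOnePow = 1 := by
  rcases Int.even_or_odd n with h | h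
  · rw [Int.negOnePow_even _ h]; norm_num
  · rw [Int.negOnePow_odd _ h]; norm_num

lemma sgn_split (x y z : ℤ) (h : Even (x - (y+z))) :
    (x.negOnePow : ℤ) = y.negOnePow * z.negOnePow := by
  rw [sgn_eq h, sgn_add]

lemma sgn_ev {e : ℤ} (h : Even e) : (e.negOnePow : ℤ) = 1 := by
  rw [Int.negOnePow_even _ h]; rfl
lemma sgn_od {e : ℤ} (h : Odd e) : (e.negOnePow : ℤ) = -1 := by
  rw [Int.negOnePow_odd _ h]; rfl
lemma memc {𝒜 : ℤ → Submodule K A} {a : A} {i j : ℤ} (h : a ∈ 𝒜 i) (e : i = j) : a ∈ 𝒜 j :=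
  e ▸ h

def brk (σ : ℤ) (f g : A →ₗ[K] A) : A →ₗ[K] A := f ∘ₗ g - σ • (g ∘ₗ f)

lemma brk_jacobi (x y z : A →ₗ[K] A) (α β γ δ₁ δ₂ δ₃ : ℤ) (hγ : γ * γ = 1)
    (h1 : δ₁ = β * γ) (h2 : δ₂ = α * β) (h3 : δ₃ = α * γ) :
    brk δ₁ (brk α x y) z = brk δ₂ x (brk γ y z) + γ • brk δ₃ (brk β x z) y := by
  subst h1 h2 h3
  unfold brk
  simp only [LinearMap.sub_comp, LinearMap.comp_sub, LinearMap.smul_comp,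
    LinearMap.comp_smul, smul_sub, smul_smul, LinearMap.comp_assoc]
  match_scalars
  any_goals ring1
  any_goals linear_combination α * hγ
  any_goals linear_combination (-(α*β)) * hγ

lemma brk_swap (σ : ℤ) (h : σ * σ = 1) (f g : A →ₗ[K] A) :
    brk σ f g = -σ • brk σ g f := by
  unfold brk
  simp only [smul_sub, smul_smul, neg_mul, h, neg_neg, neg_smul, one_smul, sub_neg_eq_add]
  abel

lemma brk_add_left (σ : ℤ) (f g h : A →ₗ[K] A) :
    brk σ (f + g) h = brk σ f h + brk σ g h := by
  unfold brk
  simp only [LinearMap.add_comp, LinearMap.comp_add, smul_add]; abel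

lemma brk_smul_left (σ c : ℤ) (f h : A →ₗ[K] A) :
    brk σ (c • f) h = c • brk σ f h := by
  unfold brk
  simp only [LinearMap.smul_comp, LinearMap.comp_smul, smul_sub, smul_smul, mul_comm]

lemma brk_zero_right (σ : ℤ) (f : A →ₗ[K] A) : brk σ f 0 = 0 := by
  unfold brk; simp

lemma brk_zero_left (σ : ℤ) (f : A →ₗ[K] A) : brk σ 0 f = 0 := by
  unfold brk; simp

section Aux
variable (𝒜 : ℤ → Submodule K A) (k : ℤ) (d bi l : A →ₗ[K] A)

lemma hRmem (hA : IsGradedComm 𝒜) (hdeg : HasDeg 𝒜 bi (-(2*k)))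
    (p q : ℤ) (u : A) (hu : u ∈ 𝒜 p) (v : A) (hv : v ∈ 𝒜 q) :
    Rop bi u v ∈ 𝒜 (-(2*k) + p + q) := by
  refine sub_mem (sub_mem ?_ ?_) ?_
  · exact memc (hdeg (p+q) _ (hA.2.2.1 p q u hu v hv)) (by ring)
  · exact memc (hA.2.2.1 _ q _ (hdeg p u hu) v hv) (by ring)
  · exact memc (hA.2.2.1 p _ u hu _ (hdeg q v hv)) (by ring)

lemma part1 (hder : IsGDer 𝒜 1 d)
    (hbideg : HasDeg 𝒜 bi (-(2*k)))
    (hl : l = bi ∘ₗ d - d ∘ₗ bi)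
    (i : ℤ) (a : A) (ha : a ∈ 𝒜 i) (b : A) :
    Qop l i a b = Rop bi (d a) b + (i.negOnePow : ℤ) • Rop bi a (d b) - d (Rop bi a b) := by
  have e1 : ((1 * i).negOnePow : ℤ) = i.negOnePow := by rw [one_mul]
  have e2 : ((1 * (i + -(2*k))).negOnePow : ℤ) = i.negOnePow := by
    rw [one_mul]; exact sgn_eq ⟨-k, by ring⟩
  have h1 := hder i a ha b
  have h2 := hder (i + -(2*k)) (bi a) (hbideg i a ha) b
  have h3 := hder i a ha (bi b)
  rw [e1] at h1 h3
  rw [e2] at h2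
  subst hl
  simp only [Qop, Rop, LinearMap.sub_apply, LinearMap.comp_apply, map_sub, map_add, map_smul,
    map_zsmul]
  rw [h1, h2, h3]
  simp only [map_add, map_smul, map_zsmul, sub_mul, mul_sub, smul_sub]
  module

lemma opR_ew (hA : IsGradedComm 𝒜) (hbi : IsQuasiBV 𝒜 (-(2*k)) bi)
    (p q : ℤ) (u : A) (hu : u ∈ 𝒜 p) (v : A) (hv : v ∈ 𝒜 q) (x : A) :
    bi (u*(v*x)) = u * bi (v*x) + ((p*q).negOnePow : ℤ) • (v * bi (u*x))
      - ((p*q).negOnePow : ℤ) • (v * (u * bi x)) + Rop bi u v * x := by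
  obtain ⟨hdeg, hdiff, h1⟩ := hbi
  have h2 : IsDiff 𝒜 (-(2*k) + p + q) 0 (gcomm (-(2*k)+p) q (gcomm (-(2*k)) p bi u) v) :=
    hdiff p u hu q v hv
  set G := gcomm (-(2*k)+p) q (gcomm (-(2*k)) p bi u) v with hG
  have s1 : ((-(2*k) * p).negOnePow : ℤ) = 1 := sgn_ev ⟨-(k*p), by ring⟩
  have s2 : (((-(2*k)+p) * q).negOnePow : ℤ) = (p*q).negOnePow := sgn_eq ⟨-(k*q), by ring⟩
  have hGapp : ∀ y : A, G y = bi (u*(v*y)) - u * bi (v*y)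
      - ((p*q).negOnePow : ℤ) • (v * bi (u*y)) + ((p*q).negOnePow : ℤ) • (v * (u * bi y)) := by
    intro y
    simp only [hG, gcomm, LinearMap.sub_apply, LinearMap.comp_apply, LinearMap.smul_apply,
      LinearMap.mulLeft_apply, s1, s2, one_smul, smul_sub, mul_sub]
    module
  have hbiuv : bi u * v = ((p*q).negOnePow : ℤ) • (v * bi u) := by
    rw [hA.2.2.2 _ q (bi u) (hdeg p u hu) v hv]
    congr 1
    exact sgn_eq ⟨-(k*q), by ring⟩
  have hG1 : G 1 = Rop bi u v := by
    rw [hGapp 1]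
    simp only [mul_one, h1, mul_zero, smul_zero, add_zero, Rop, hbiuv]
    abel
  have key : ∀ y : A, G y = Rop bi u v * y := by
    intro y
    have htop : y ∈ ⨆ n, 𝒜 n := by rw [hA.1.submodule_iSup_eq_top]; trivial
    refine Submodule.iSup_induction (motive := fun y => G y = Rop bi u v * y) 𝒜 htop ?_ (by simp) ?_
    · intro n w hw
      have h0 := DFunLike.congr_fun (h2 n w hw) (1 : A)
      simp only [gcomm, LinearMap.sub_apply, LinearMap.comp_apply, LinearMap.smul_apply,
        LinearMap.mulLeft_apply, LinearMap.zero_apply, mul_one, sub_eq_zero] at h0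
      rw [h0, hG1, hA.2.2.2 _ n (Rop bi u v) (hRmem 𝒜 k bi hA hdeg p q u hu v hv) w hw]
    · intro y z hy hz
      simp only [map_add, mul_add, hy, hz]
  have h5 := key x
  rw [hGapp x] at h5
  rw [← h5]
  abel

lemma opQ_ew (hA : IsGradedComm 𝒜) (hder : IsGDer 𝒜 1 d) (hddeg : HasDeg 𝒜 d 1)
    (hbi : IsQuasiBV 𝒜 (-(2*k)) bi) (hl : l = bi ∘ₗ d - d ∘ₗ bi)
    (p q : ℤ) (u : A) (hu : u ∈ 𝒜 p) (v : A) (hv : v ∈ 𝒜 q) (x : A) :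
    l (u*(v*x)) = (p.negOnePow : ℤ) • (u * l (v*x))
      + (((p+1)*q).negOnePow : ℤ) • (v * l (u*x))
      - (((p+1)*q).negOnePow : ℤ) • ((p.negOnePow : ℤ) • (v * (u * l x)))
      + Qop l p u v * x := by
  have hRm := hRmem 𝒜 k bi hA hbi.1 p q u hu v hv
  -- Leibniz instances
  have hd_uv := hder p u hu (v*x)
  have hd_v := hder q v hv x
  have hd_u := hder p u hu x
  have L1 := hder p u hu (bi (v*x))
  have L2 := hder q v hv (bi (u*x))
  have L3 := hder q v hv (u * bi x)
  have L4 := hder p u hu (bi x)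
  have hd_R := hder (-(2*k)+p+q) (Rop bi u v) hRm x
  -- opR instances
  have O1 := opR_ew 𝒜 k bi hA hbi (p+1) q (d u) (hddeg p u hu) v hv x
  have O2 := opR_ew 𝒜 k bi hA hbi p (q+1) u hu (d v) (hddeg q v hv) x
  have O3 := opR_ew 𝒜 k bi hA hbi p q u hu v hv (d x)
  have O4 := opR_ew 𝒜 k bi hA hbi p q u hu v hv x
  have E1p : ((1*p).negOnePow : ℤ) = p.negOnePow := by rw [one_mul]
  have E1q : ((1*q).negOnePow : ℤ) = q.negOnePow := by rw [one_mul]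
  have E2 : (((p+1)*q).negOnePow : ℤ) = (p*q).negOnePow * q.negOnePow := by
    rw [show (p+1)*q = p*q + q by ring, sgn_add]
  have E3 : ((p*(q+1)).negOnePow : ℤ) = (p*q).negOnePow * p.negOnePow := by
    rw [show p*(q+1) = p*q + p by ring, sgn_add]
  have E4 : ((1*(-(2*k)+p+q)).negOnePow : ℤ) = (p.negOnePow : ℤ) * q.negOnePow := by
    rw [one_mul, sgn_eq (y := p + q) ⟨-k, by ring⟩, sgn_add]
  rw [E1p] at hd_uv hd_u L1 L4
  rw [E1q] at hd_v L2 L3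
  rw [E4] at hd_R
  rw [E2] at O1
  rw [E3] at O2
  rw [part1 𝒜 k d bi l hder hbi.1 hl p u hu v, E2]
  simp only [hl, LinearMap.sub_apply, LinearMap.comp_apply]
  rw [hd_uv, hd_v, hd_u]
  simp only [map_add, map_zsmul, mul_add, mul_smul_comm, map_sub, smul_sub, mul_sub, smul_add,
    smul_smul, add_mul, sub_mul, smul_mul_assoc]
  rw [O1, O2, O3, O4]
  simp only [map_add, map_zsmul, map_sub, mul_add, mul_smul_comm, smul_add, smul_sub, mul_sub,
    smul_smul, add_mul, sub_mul, smul_mul_assoc]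
  rw [hd_R, L1, L2, L3, L4]
  simp only [map_add, map_zsmul, map_sub, mul_add, mul_smul_comm, smul_add, smul_sub, mul_sub,
    smul_smul, add_mul, sub_mul, smul_mul_assoc]
  rcases Int.even_or_odd p with hp | hp <;> rcases Int.even_or_odd q with hq | hq
  · simp only [sgn_ev hp, sgn_ev hq, sgn_ev (hp.mul_right q)]; module
  · simp only [sgn_ev hp, sgn_od hq, sgn_ev (hp.mul_right q)]; module
  · simp only [sgn_od hp, sgn_ev hq, sgn_ev (hq.mul_left p)]; module
  · simp only [sgn_od hp, sgn_od hq, sgn_od (hp.mul hq)]; module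

lemma hldeg (hddeg : HasDeg 𝒜 d 1) (hbideg : HasDeg 𝒜 bi (-(2*k)))
    (hl : l = bi ∘ₗ d - d ∘ₗ bi) : HasDeg 𝒜 l (-(2*k)+1) := by
  intro p u hu
  subst hl
  exact sub_mem (memc (hbideg (p+1) _ (hddeg p u hu)) (by ring))
    (memc (hddeg _ _ (hbideg p u hu)) (by ring))

lemma hQmem (hA : IsGradedComm 𝒜) (hldg : HasDeg 𝒜 l (-(2*k)+1))
    (p q : ℤ) (u : A) (hu : u ∈ 𝒜 p) (v : A) (hv : v ∈ 𝒜 q) :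
    Qop l p u v ∈ 𝒜 (-(2*k)+1 + p + q) := by
  refine sub_mem (sub_mem ?_ ?_) ((𝒜 _).toAddSubgroup.zsmul_mem ?_ _)
  · exact memc (hldg (p+q) _ (hA.2.2.1 p q u hu v hv)) (by ring)
  · exact memc (hA.2.2.1 _ q _ (hldg p u hu) v hv) (by ring)
  · exact memc (hA.2.2.1 p _ u hu _ (hldg q v hv)) (by ring)

lemma opR_op (hA : IsGradedComm 𝒜) (hbi : IsQuasiBV 𝒜 (-(2*k)) bi)
    (p q : ℤ) (u : A) (hu : u ∈ 𝒜 p) (v : A) (hv : v ∈ 𝒜 q) :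
    brk ((p*q).negOnePow : ℤ) (brk 1 bi (LinearMap.mulLeft K u)) (LinearMap.mulLeft K v)
      = LinearMap.mulLeft K (Rop bi u v) := by
  ext x
  simp only [brk, LinearMap.sub_apply, LinearMap.comp_apply, LinearMap.smul_apply,
    LinearMap.mulLeft_apply, one_smul, smul_sub, mul_sub]
  rw [opR_ew 𝒜 k bi hA hbi p q u hu v hv x]
  module

lemma opQ_op (hA : IsGradedComm 𝒜) (hder : IsGDer 𝒜 1 d) (hddeg : HasDeg 𝒜 d 1)
    (hbi : IsQuasiBV 𝒜 (-(2*k)) bi) (hl : l = bi ∘ₗ d - d ∘ₗ bi)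
    (p q : ℤ) (u : A) (hu : u ∈ 𝒜 p) (v : A) (hv : v ∈ 𝒜 q) :
    brk (((p*q).negOnePow : ℤ) * (q.negOnePow : ℤ))
        (brk (p.negOnePow : ℤ) l (LinearMap.mulLeft K u)) (LinearMap.mulLeft K v)
      = LinearMap.mulLeft K (Qop l p u v) := by
  have E2 : (((p+1)*q).negOnePow : ℤ) = (p*q).negOnePow * q.negOnePow := by
    rw [show (p+1)*q = p*q + q by ring, sgn_add]
  ext x
  simp only [brk, LinearMap.sub_apply, LinearMap.comp_apply, LinearMap.smul_apply,
    LinearMap.mulLeft_apply, one_smul, smul_sub, mul_sub, mul_smul_comm, smul_smul]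
  rw [opQ_ew 𝒜 k d bi l hA hder hddeg hbi hl p q u hu v hv x, E2]
  module

lemma brkLL (hA : IsGradedComm 𝒜) (p q : ℤ) (u : A) (hu : u ∈ 𝒜 p) (v : A) (hv : v ∈ 𝒜 q) :
    brk ((p*q).negOnePow : ℤ) (LinearMap.mulLeft K u) (LinearMap.mulLeft K v) = 0 := by
  ext x
  simp only [brk, LinearMap.sub_apply, LinearMap.comp_apply, LinearMap.smul_apply,
    LinearMap.mulLeft_apply, LinearMap.zero_apply]
  rw [← mul_assoc, hA.2.2.2 p q u hu v hv, smul_mul_assoc, mul_assoc, sub_self]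

lemma Rsymm (hA : IsGradedComm 𝒜) (hbideg : HasDeg 𝒜 bi (-(2*k)))
    (p q : ℤ) (u : A) (hu : u ∈ 𝒜 p) (v : A) (hv : v ∈ 𝒜 q) :
    Rop bi u v = ((p*q).negOnePow : ℤ) • Rop bi v u := by
  have c1 : u * v = ((p*q).negOnePow : ℤ) • (v*u) := hA.2.2.2 p q u hu v hv
  have c2 : bi u * v = ((p*q).negOnePow : ℤ) • (v * bi u) := by
    rw [hA.2.2.2 _ q (bi u) (hbideg p u hu) v hv]; congr 1; exact sgn_eq ⟨-(k*q), by ring⟩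
  have c3 : u * bi v = ((p*q).negOnePow : ℤ) • (bi v * u) := by
    rw [hA.2.2.2 p _ u hu (bi v) (hbideg q v hv)]; congr 1; exact sgn_eq ⟨-(k*p), by ring⟩
  simp only [Rop, c1, c2, c3, map_zsmul, smul_sub]
  abel

lemma Qsymm (hA : IsGradedComm 𝒜) (hldg : HasDeg 𝒜 l (-(2*k)+1))
    (p q : ℤ) (u : A) (hu : u ∈ 𝒜 p) (v : A) (hv : v ∈ 𝒜 q) :
    Qop l p u v = ((p*q).negOnePow : ℤ) • Qop l q v u := by
  have c1 : u * v = ((p*q).negOnePow : ℤ) • (v*u) := hA.2.2.2 p q u hu v hv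
  have c2 : l u * v = (((p*q).negOnePow : ℤ) * (q.negOnePow : ℤ)) • (v * l u) := by
    rw [hA.2.2.2 _ q (l u) (hldg p u hu) v hv]; congr 1
    rw [show ((p + (-(2*k)+1)) * q) = (p*q + q) + -(2*(k*q)) by ring,
      sgn_eq (y := p*q + q) ⟨-(k*q), by ring⟩, sgn_add]
  have c3 : u * l v = (((p*q).negOnePow : ℤ) * (p.negOnePow : ℤ)) • (l v * u) := by
    rw [hA.2.2.2 p _ u hu (l v) (hldg q v hv)]; congr 1
    rw [sgn_eq (y := p*q + p) ⟨-(k*p), by ring⟩, sgn_add]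
  simp only [Qop, c1, c2, c3, map_zsmul, smul_sub, smul_smul]
  rcases Int.even_or_odd p with hp | hp
  · simp only [sgn_ev hp]; module
  · simp only [sgn_od hp]; module

end Aux


set_option maxHeartbeats 1000000 in
/-- `Q = [R, d]` and `[Q, R] = 0` in `D(A[2k])` (componentwise). -/
theorem Q_eq_bracket_R_d_and_QR_eq_zero
    (𝒜 : ℤ → Submodule K A) (hA : IsGradedComm 𝒜)
    (d : A →ₗ[K] A) (hddeg : HasDeg 𝒜 d 1) (hder : IsGDer 𝒜 1 d) (hd2 : d ∘ₗ d = 0)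
    (k : ℤ) (bi : A →ₗ[K] A) (hbi : IsQuasiBV 𝒜 (-(2 * k)) bi)
    (l : A →ₗ[K] A) (hl : l = bi ∘ₗ d - d ∘ₗ bi)
    (hli : IsQuasiBV 𝒜 (-(4 * k) + 1) (l ∘ₗ bi - bi ∘ₗ l)) :
    -- `Q = [R, d]` componentwise:
    (∀ i : ℤ, ∀ a ∈ 𝒜 i, ∀ b : A,
      Qop l i a b
        = Rop bi (d a) b + (i.negOnePow : ℤ) • Rop bi a (d b) - d (Rop bi a b)) ∧
    -- `[Q, R] = 0` componentwise:
    (∀ i j m : ℤ, ∀ a ∈ 𝒜 i, ∀ b ∈ 𝒜 j, ∀ c ∈ 𝒜 m,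
      Qop l (i + j - 2 * k) (Rop bi a b) c
          + ((j * m).negOnePow : ℤ) • Qop l (i + m - 2 * k) (Rop bi a c) b
          + ((i * (j + m)).negOnePow : ℤ) • Qop l (j + m - 2 * k) (Rop bi b c) a
          - Rop bi (Qop l i a b) c
          - ((j * m).negOnePow : ℤ) • Rop bi (Qop l i a c) b
          - ((i * (j + m)).negOnePow : ℤ) • Rop bi (Qop l j b c) a
        = 0) := by
  constructor
  · intro i a ha b
    exact part1 𝒜 k d bi l hder hbi.1 hl i a ha b
  intro i j m a ha b hb c hc
  have hld : HasDeg 𝒜 l (-(2*k)+1) := hldeg 𝒜 k d bi l hddeg hbi.1 hl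
  have hRab := hRmem 𝒜 k bi hA hbi.1 i j a ha b hb
  have hRac := hRmem 𝒜 k bi hA hbi.1 i m a ha c hc
  have hRbc := hRmem 𝒜 k bi hA hbi.1 j m b hb c hc
  have hQab := hQmem 𝒜 k l hA hld i j a ha b hb
  have hQac := hQmem 𝒜 k l hA hld i m a ha c hc
  have hQbc := hQmem 𝒜 k l hA hld j m b hb c hc
  have Rab_op := opR_op 𝒜 k bi hA hbi i j a ha b hb
  have Rac_op := opR_op 𝒜 k bi hA hbi i m a ha c hc
  have Rbc_op := opR_op 𝒜 k bi hA hbi j m b hb c hc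
  have Qab_op := opQ_op 𝒜 k d bi l hA hder hddeg hbi hl i j a ha b hb
  have Qac_op := opQ_op 𝒜 k d bi l hA hder hddeg hbi hl i m a ha c hc
  have Qbc_op := opQ_op 𝒜 k d bi l hA hder hddeg hbi hl j m b hb c hc
  have QcRab_op := opQ_op 𝒜 k d bi l hA hder hddeg hbi hl m (-(2*k)+i+j) c hc _ hRab
  have QbRac_op := opQ_op 𝒜 k d bi l hA hder hddeg hbi hl j (-(2*k)+i+m) b hb _ hRac
  have QaRbc_op := opQ_op 𝒜 k d bi l hA hder hddeg hbi hl i (-(2*k)+j+m) a ha _ hRbc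
  have RaQbc_op := opR_op 𝒜 k bi hA hbi i (-(2*k)+1+j+m) a ha _ hQbc
  have RbQac_op := opR_op 𝒜 k bi hA hbi j (-(2*k)+1+i+m) b hb _ hQac
  have RcQab_op := opR_op 𝒜 k bi hA hbi m (-(2*k)+1+i+j) c hc _ hQab
  have eRaQbc : ((i*(-(2*k)+1+j+m)).negOnePow : ℤ)
      = (i.negOnePow : ℤ) * ((i*j).negOnePow : ℤ) * ((i*m).negOnePow : ℤ) := by
    rw [sgn_eq (y := i + (i*j + i*m)) ⟨-(k*i), by ring⟩, sgn_add, sgn_add]; ring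
  have eRbQac : ((j*(-(2*k)+1+i+m)).negOnePow : ℤ)
      = ((i*j).negOnePow : ℤ) * (j.negOnePow : ℤ) * ((j*m).negOnePow : ℤ) := by
    rw [sgn_eq (y := i*j + (j + j*m)) ⟨-(k*j), by ring⟩, sgn_add, sgn_add]; ring
  have eRcQab : ((m*(-(2*k)+1+i+j)).negOnePow : ℤ)
      = ((i*m).negOnePow : ℤ) * (((j*m).negOnePow : ℤ) * (m.negOnePow : ℤ)) := by
    rw [sgn_eq (y := i*m + (j*m + m)) ⟨-(k*m), by ring⟩, sgn_add, sgn_add]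
  rw [eRaQbc] at RaQbc_op
  rw [eRbQac] at RbQac_op
  rw [eRcQab] at RcQab_op
  have hsq3a : ((i.negOnePow : ℤ) * ((i*j).negOnePow : ℤ) * ((i*m).negOnePow : ℤ))
      * ((i.negOnePow : ℤ) * ((i*j).negOnePow : ℤ) * ((i*m).negOnePow : ℤ)) = 1 := by
    rw [show ((i.negOnePow : ℤ) * ((i*j).negOnePow : ℤ) * ((i*m).negOnePow : ℤ))
      * ((i.negOnePow : ℤ) * ((i*j).negOnePow : ℤ) * ((i*m).negOnePow : ℤ))
      = (((i.negOnePow : ℤ)) * (i.negOnePow : ℤ)) * ((((i*j).negOnePow : ℤ)) * ((i*j).negOnePow : ℤ)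
        * ((((i*m).negOnePow : ℤ)) * ((i*m).negOnePow : ℤ))) from by ring,
      sgn_sq, sgn_sq, sgn_sq]
    norm_num
  have hsq3b : (((i*j).negOnePow : ℤ) * (j.negOnePow : ℤ) * ((j*m).negOnePow : ℤ))
      * (((i*j).negOnePow : ℤ) * (j.negOnePow : ℤ) * ((j*m).negOnePow : ℤ)) = 1 := by
    rw [show (((i*j).negOnePow : ℤ) * (j.negOnePow : ℤ) * ((j*m).negOnePow : ℤ))
      * (((i*j).negOnePow : ℤ) * (j.negOnePow : ℤ) * ((j*m).negOnePow : ℤ))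
      = (((j.negOnePow : ℤ)) * (j.negOnePow : ℤ)) * ((((i*j).negOnePow : ℤ)) * ((i*j).negOnePow : ℤ)
        * ((((j*m).negOnePow : ℤ)) * ((j*m).negOnePow : ℤ))) from by ring,
      sgn_sq, sgn_sq, sgn_sq]
    norm_num
  have hsqS3 : (((i*m).negOnePow : ℤ) * (((j*m).negOnePow : ℤ) * (m.negOnePow : ℤ)))
      * (((i*m).negOnePow : ℤ) * (((j*m).negOnePow : ℤ) * (m.negOnePow : ℤ))) = 1 := by
    rw [show (((i*m).negOnePow : ℤ) * (((j*m).negOnePow : ℤ) * (m.negOnePow : ℤ)))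
      * (((i*m).negOnePow : ℤ) * (((j*m).negOnePow : ℤ) * (m.negOnePow : ℤ)))
      = (((m.negOnePow : ℤ)) * (m.negOnePow : ℤ)) * ((((i*m).negOnePow : ℤ)) * ((i*m).negOnePow : ℤ)
        * ((((j*m).negOnePow : ℤ)) * ((j*m).negOnePow : ℤ))) from by ring,
      sgn_sq, sgn_sq, sgn_sq]
    norm_num
  have hsq2 : (((i*m).negOnePow : ℤ) * ((j*m).negOnePow : ℤ))
      * (((i*m).negOnePow : ℤ) * ((j*m).negOnePow : ℤ)) = 1 := by
    rw [mul_mul_mul_comm, sgn_sq, sgn_sq, mul_one]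
  have LLRc : brk (((i*m).negOnePow : ℤ) * ((j*m).negOnePow : ℤ))
      (LinearMap.mulLeft K (Rop bi a b)) (LinearMap.mulLeft K c) = 0 := by
    rw [show (((i*m).negOnePow : ℤ) * ((j*m).negOnePow : ℤ))
        = (((-(2*k)+i+j)*m).negOnePow : ℤ) from
      (sgn_split ((-(2*k)+i+j)*m) (i*m) (j*m) ⟨-(k*m), by ring⟩).symm]
    exact brkLL 𝒜 hA (-(2*k)+i+j) m _ hRab c hc
  have LLQc : brk (((i*m).negOnePow : ℤ) * (((j*m).negOnePow : ℤ) * (m.negOnePow : ℤ)))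
      (LinearMap.mulLeft K (Qop l i a b)) (LinearMap.mulLeft K c) = 0 := by
    rw [show (((i*m).negOnePow : ℤ) * (((j*m).negOnePow : ℤ) * (m.negOnePow : ℤ)))
        = (((-(2*k)+1+i+j)*m).negOnePow : ℤ) from by
      rw [sgn_eq (x := (-(2*k)+1+i+j)*m) (y := i*m + (j*m + m)) ⟨-(k*m), by ring⟩,
        sgn_add, sgn_add]]
    exact brkLL 𝒜 hA (-(2*k)+1+i+j) m _ hQab c hc
  -- the triple commutator from hli
  have H0 := hli.2.1 i a ha j b hb m c hc
  have hgb : ∀ (r n : ℤ) (f : A →ₗ[K] A) (w : A),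
      gcomm r n f w = brk ((r*n).negOnePow : ℤ) f (LinearMap.mulLeft K w) := fun _ _ _ _ => rfl
  rw [hgb, hgb, hgb] at H0
  rw [show (((-(4*k)+1) * i).negOnePow : ℤ) = (i.negOnePow : ℤ) from
      sgn_eq ⟨-(2*(k*i)), by ring⟩] at H0
  rw [show (((-(4*k)+1+i) * j).negOnePow : ℤ) = ((i*j).negOnePow : ℤ) * (j.negOnePow : ℤ) from
      sgn_split _ (i*j) j ⟨-(2*(k*j)), by ring⟩] at H0
  rw [show (((-(4*k)+1+i+j) * m).negOnePow : ℤ)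
      = ((i*m).negOnePow : ℤ) * (((j*m).negOnePow : ℤ) * (m.negOnePow : ℤ)) from by
      rw [sgn_eq (y := i*m + (j*m + m)) ⟨-(2*(k*m)), by ring⟩, sgn_add, sgn_add]] at H0
  rw [show l ∘ₗ bi - bi ∘ₗ l = brk 1 l bi from by unfold brk; rw [one_smul]] at H0
  -- step 1
  have St1 := brk_jacobi l bi (LinearMap.mulLeft K a) 1 (i.negOnePow : ℤ) 1
    (i.negOnePow : ℤ) (i.negOnePow : ℤ) 1 (by ring) (by ring) (by ring) (by ring)
  rw [one_smul] at St1
  rw [St1] at H0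
  simp only [brk_add_left, brk_smul_left] at H0
  -- step 2
  have StA := brk_jacobi l (brk 1 bi (LinearMap.mulLeft K a)) (LinearMap.mulLeft K b)
    (i.negOnePow : ℤ) (j.negOnePow : ℤ) ((i*j).negOnePow : ℤ)
    (((i*j).negOnePow : ℤ) * (j.negOnePow : ℤ))
    ((i.negOnePow : ℤ) * (j.negOnePow : ℤ))
    ((i.negOnePow : ℤ) * ((i*j).negOnePow : ℤ))
    (sgn_sq _) (by ring) (by ring) (by ring)
  have StB := brk_jacobi (brk (i.negOnePow : ℤ) l (LinearMap.mulLeft K a)) bi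
    (LinearMap.mulLeft K b) 1 (((i*j).negOnePow : ℤ) * (j.negOnePow : ℤ)) 1
    (((i*j).negOnePow : ℤ) * (j.negOnePow : ℤ))
    (((i*j).negOnePow : ℤ) * (j.negOnePow : ℤ)) 1 (by ring) (by ring) (by ring) (by ring)
  rw [one_smul] at StB
  rw [StA, Rab_op, StB, Qab_op] at H0
  simp only [brk_add_left, brk_smul_left] at H0
  -- step 3: V1
  have StV1 := brk_jacobi l (LinearMap.mulLeft K (Rop bi a b)) (LinearMap.mulLeft K c)
    ((i.negOnePow : ℤ) * (j.negOnePow : ℤ)) (m.negOnePow : ℤ)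
    (((i*m).negOnePow : ℤ) * ((j*m).negOnePow : ℤ))
    (((i*m).negOnePow : ℤ) * (((j*m).negOnePow : ℤ) * (m.negOnePow : ℤ)))
    ((i.negOnePow : ℤ) * (j.negOnePow : ℤ) * (m.negOnePow : ℤ))
    (((m*(-(2*k)+i+j)).negOnePow : ℤ) * (((-(2*k)+i+j)).negOnePow : ℤ))
    hsq2 (by ring) (by ring) (by
      rw [sgn_split (m*(-(2*k)+i+j)) (i*m) (j*m) ⟨-(k*m), by ring⟩,
        sgn_split (-(2*k)+i+j) i j ⟨-k, by ring⟩]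
      ring)
  rw [StV1, LLRc, brk_zero_right, QcRab_op] at H0
  -- step 4: V2
  have StV2 := brk_jacobi (brk (j.negOnePow : ℤ) l (LinearMap.mulLeft K b))
    (brk 1 bi (LinearMap.mulLeft K a)) (LinearMap.mulLeft K c)
    ((i.negOnePow : ℤ) * ((i*j).negOnePow : ℤ))
    (((j*m).negOnePow : ℤ) * (m.negOnePow : ℤ))
    ((i*m).negOnePow : ℤ)
    (((i*m).negOnePow : ℤ) * (((j*m).negOnePow : ℤ) * (m.negOnePow : ℤ)))
    (((j*(-(2*k)+i+m)).negOnePow : ℤ) * (((-(2*k)+i+m)).negOnePow : ℤ))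
    ((i.negOnePow : ℤ) * ((i*j).negOnePow : ℤ) * ((i*m).negOnePow : ℤ))
    (sgn_sq _) (by ring) (by
      rw [sgn_split (j*(-(2*k)+i+m)) (i*j) (j*m) ⟨-(k*j), by ring⟩,
        sgn_split (-(2*k)+i+m) i m ⟨-k, by ring⟩]
      ring) (by ring)
  have SwV2 := brk_swap ((i.negOnePow : ℤ) * ((i*j).negOnePow : ℤ) * ((i*m).negOnePow : ℤ))
    hsq3a (LinearMap.mulLeft K (Qop l j b c)) (brk 1 bi (LinearMap.mulLeft K a))
  rw [RaQbc_op] at SwV2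
  rw [StV2, Rac_op, QbRac_op, Qbc_op, SwV2] at H0
  -- step 5: V3
  have StV3 := brk_jacobi (brk (i.negOnePow : ℤ) l (LinearMap.mulLeft K a))
    (brk 1 bi (LinearMap.mulLeft K b)) (LinearMap.mulLeft K c)
    (((i*j).negOnePow : ℤ) * (j.negOnePow : ℤ))
    (((i*m).negOnePow : ℤ) * (m.negOnePow : ℤ))
    ((j*m).negOnePow : ℤ)
    (((i*m).negOnePow : ℤ) * (((j*m).negOnePow : ℤ) * (m.negOnePow : ℤ)))
    (((i*(-(2*k)+j+m)).negOnePow : ℤ) * (((-(2*k)+j+m)).negOnePow : ℤ))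
    (((i*j).negOnePow : ℤ) * (j.negOnePow : ℤ) * ((j*m).negOnePow : ℤ))
    (sgn_sq _) (by ring) (by
      rw [sgn_split (i*(-(2*k)+j+m)) (i*j) (i*m) ⟨-(k*i), by ring⟩,
        sgn_split (-(2*k)+j+m) j m ⟨-k, by ring⟩]
      ring) (by ring)
  have SwV3 := brk_swap (((i*j).negOnePow : ℤ) * (j.negOnePow : ℤ) * ((j*m).negOnePow : ℤ))
    hsq3b (LinearMap.mulLeft K (Qop l i a c)) (brk 1 bi (LinearMap.mulLeft K b))
  rw [RbQac_op] at SwV3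
  rw [StV3, Rbc_op, QaRbc_op, Qac_op, SwV3] at H0
  -- step 6: V4
  have StV4 := brk_jacobi (LinearMap.mulLeft K (Qop l i a b)) bi (LinearMap.mulLeft K c)
    1 (((i*m).negOnePow : ℤ) * (((j*m).negOnePow : ℤ) * (m.negOnePow : ℤ))) 1
    (((i*m).negOnePow : ℤ) * (((j*m).negOnePow : ℤ) * (m.negOnePow : ℤ)))
    (((i*m).negOnePow : ℤ) * (((j*m).negOnePow : ℤ) * (m.negOnePow : ℤ))) 1
    (by ring) (by ring) (by ring) (by ring)
  rw [one_smul] at StV4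
  have SwV4 := brk_swap (((i*m).negOnePow : ℤ) * (((j*m).negOnePow : ℤ) * (m.negOnePow : ℤ)))
    hsqS3 (LinearMap.mulLeft K (Qop l i a b)) (brk 1 bi (LinearMap.mulLeft K c))
  rw [RcQab_op] at SwV4
  rw [StV4, LLQc, brk_zero_left, SwV4] at H0
  -- evaluate at 1
  have key := DFunLike.congr_fun H0 (1 : A)
  simp only [LinearMap.add_apply, LinearMap.smul_apply, LinearMap.neg_apply,
    LinearMap.mulLeft_apply, LinearMap.zero_apply, mul_one, add_zero, zero_add,
    smul_neg, neg_smul, smul_smul] at key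
  -- symmetry conversions in the goal
  have g1 : Qop l (i + j - 2 * k) (Rop bi a b) c
      = (((i*m).negOnePow : ℤ) * ((j*m).negOnePow : ℤ)) • Qop l m c (Rop bi a b) := by
    rw [Qsymm 𝒜 k l hA hld (i+j-2*k) m _ (memc hRab (by ring)) c hc]
    congr 1
    exact sgn_split ((i+j-2*k)*m) (i*m) (j*m) ⟨-(k*m), by ring⟩
  have g2 : Qop l (i + m - 2 * k) (Rop bi a c) b
      = (((i*j).negOnePow : ℤ) * ((j*m).negOnePow : ℤ)) • Qop l j b (Rop bi a c) := by
    rw [Qsymm 𝒜 k l hA hld (i+m-2*k) j _ (memc hRac (by ring)) b hb]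
    congr 1
    exact sgn_split ((i+m-2*k)*j) (i*j) (j*m) ⟨-(k*j), by ring⟩
  have g3 : Qop l (j + m - 2 * k) (Rop bi b c) a
      = (((i*j).negOnePow : ℤ) * ((i*m).negOnePow : ℤ)) • Qop l i a (Rop bi b c) := by
    rw [Qsymm 𝒜 k l hA hld (j+m-2*k) i _ (memc hRbc (by ring)) a ha]
    congr 1
    exact sgn_split ((j+m-2*k)*i) (i*j) (i*m) ⟨-(k*i), by ring⟩
  have g4 : Rop bi (Qop l i a b) c
      = (((i*m).negOnePow : ℤ) * (((j*m).negOnePow : ℤ) * (m.negOnePow : ℤ)))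
        • Rop bi c (Qop l i a b) := by
    rw [Rsymm 𝒜 k bi hA hbi.1 (-(2*k)+1+i+j) m _ hQab c hc]
    congr 1
    rw [sgn_eq (x := (-(2*k)+1+i+j)*m) (y := i*m + (j*m + m)) ⟨-(k*m), by ring⟩,
      sgn_add, sgn_add]
  have g5 : Rop bi (Qop l i a c) b
      = (((i*j).negOnePow : ℤ) * (((j*m).negOnePow : ℤ) * (j.negOnePow : ℤ)))
        • Rop bi b (Qop l i a c) := by
    rw [Rsymm 𝒜 k bi hA hbi.1 (-(2*k)+1+i+m) j _ hQac b hb]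
    congr 1
    rw [sgn_eq (x := (-(2*k)+1+i+m)*j) (y := i*j + (j*m + j)) ⟨-(k*j), by ring⟩,
      sgn_add, sgn_add]
  have g6 : Rop bi (Qop l j b c) a
      = (((i*j).negOnePow : ℤ) * (((i*m).negOnePow : ℤ) * (i.negOnePow : ℤ)))
        • Rop bi a (Qop l j b c) := by
    rw [Rsymm 𝒜 k bi hA hbi.1 (-(2*k)+1+j+m) i _ hQbc a ha]
    congr 1
    rw [sgn_eq (x := (-(2*k)+1+j+m)*i) (y := i*j + (i*m + i)) ⟨-(k*i), by ring⟩,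
      sgn_add, sgn_add]
  have g7 : ((i*(j+m)).negOnePow : ℤ) = ((i*j).negOnePow : ℤ) * ((i*m).negOnePow : ℤ) :=
    sgn_split _ (i*j) (i*m) ⟨0, by ring⟩
  rw [g1, g2, g3, g4, g5, g6, g7]
  -- finish: case split on parities
  rcases Int.even_or_odd i with hi | hi <;> rcases Int.even_or_odd j with hj | hj <;>
    rcases Int.even_or_odd m with hm | hm
  · simp only [sgn_ev hi, sgn_ev hj, sgn_ev hm, sgn_ev (hi.mul_right j),
      sgn_ev (hi.mul_right m), sgn_ev (hj.mul_right m)] at key ⊢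
    rw [← key]; module
  · simp only [sgn_ev hi, sgn_ev hj, sgn_od hm, sgn_ev (hi.mul_right j),
      sgn_ev (hi.mul_right m), sgn_ev (hj.mul_right m)] at key ⊢
    rw [← key]; module
  · simp only [sgn_ev hi, sgn_od hj, sgn_ev hm, sgn_ev (hi.mul_right j),
      sgn_ev (hi.mul_right m), sgn_ev (hm.mul_left j)] at key ⊢
    rw [← key]; module
  · simp only [sgn_ev hi, sgn_od hj, sgn_od hm, sgn_ev (hi.mul_right j),
      sgn_ev (hi.mul_right m), sgn_od (hj.mul hm)] at key ⊢
    rw [← key]; module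
  · simp only [sgn_od hi, sgn_ev hj, sgn_ev hm, sgn_ev (hj.mul_left i),
      sgn_ev (hm.mul_left i), sgn_ev (hj.mul_right m)] at key ⊢
    rw [← key]; module
  · simp only [sgn_od hi, sgn_ev hj, sgn_od hm, sgn_ev (hj.mul_left i),
      sgn_od (hi.mul hm), sgn_ev (hj.mul_right m)] at key ⊢
    rw [← key]; module
  · simp only [sgn_od hi, sgn_od hj, sgn_ev hm, sgn_od (hi.mul hj),
      sgn_ev (hm.mul_left i), sgn_ev (hm.mul_left j)] at key ⊢
    rw [← key]; module
  · simp only [sgn_od hi, sgn_od hj, sgn_od hm, sgn_od (hi.mul hj),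
      sgn_od (hi.mul hm), sgn_od (hj.mul hm)] at key ⊢
    rw [← key]; module
end

section
/- Under the hypotheses of the preceding Gerstenhaber-algebra theorem (i a quasi-BV operator of even degree −2k on DGCA (A,d), l = [i,d], and [l,i] quasi-BV), if additionally l² = 0, then (A, d, ·, [,]_l, l) is a Batalin–Vilkovisky algebra: l is an odd second-order operator with l(1) = 0, l² = 0, and the bracket [a,b]_l = (−1)^{|a|}(l(ab) − l(a)b) − a l(b) makes (A, d, ·, [,]_l) a Gerstenhaber algebra generated by l. -/
set_option maxHeartbeats 2000000
set_option maxRecDepth 8192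
set_option linter.unusedSectionVars false
set_option linter.deprecated false
set_option linter.unusedVariables false


/-!
STATEMENT 13 (last part of Theorem 4.3 of the paper):
Under the hypotheses of the Gerstenhaber-algebra theorem (`i` quasi-BV of even degree `-2k`
on the DGCA `(A, d)`, `l = [i, d]`, `[l, i]` quasi-BV), if additionally `l² = 0`, then
`(A, d, ·, [,]_l, l)` is a Batalin–Vilkovisky algebra: `l` is an odd (degree `-2k+1`)
second-order operator with `l(1) = 0` and `l² = 0`, and the bracket generated by `l`,
`[a,b]_l = (-1)^{|a|}(l(ab) - l(a)b) - a l(b)`, satisfies the graded Poisson and Jacobi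
identities, making `(A, d, ·, [,]_l)` a Gerstenhaber algebra.
-/

variable {K : Type} [Field K] [CharZero K]
variable {A : Type} [Ring A] [Algebra K A]

def koszulBr (l : A →ₗ[K] A) (i : ℤ) (a b : A) : A :=
  (i.negOnePow : ℤ) • (l (a * b) - l a * b) - a * l b

/-! ### auxiliary sign lemmas -/

lemma odd_iff_false_of_even {n : ℤ} (h : Even n) : Odd n ↔ False := by
  simp [← Int.not_even_iff_odd, h]

lemma even_iff_false_of_odd {n : ℤ} (h : Odd n) : Even n ↔ False := by
  simp [← Int.not_odd_iff_even, h]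

lemma odd_two_mul_iff (k : ℤ) : Odd (2 * k) ↔ False := by
  simp [← Int.not_even_iff_odd]

lemma odd_two_int : Odd (2 : ℤ) ↔ False := by
  simp [← Int.not_even_iff_odd]

lemma negOnePow_ite (n : ℤ) : (n.negOnePow : ℤ) = if Even n then 1 else -1 := by
  by_cases h : Even n
  · simp [h, Int.negOnePow_even _ h]
  · simp [h, Int.negOnePow_odd _ (Int.not_even_iff_odd.mp h)]

lemma negOnePow_sq (n : ℤ) : (n.negOnePow : ℤ) * (n.negOnePow : ℤ) = 1 := by
  rw [← Units.val_mul, Int.units_mul_self, Units.val_one]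

/-! ### gcomm linearity -/

lemma gcomm_add (r i : ℤ) (f g : A →ₗ[K] A) (a : A) :
    gcomm r i (f + g) a = gcomm r i f a + gcomm r i g a := by
  unfold gcomm; ext x
  simp [mul_add, smul_add]
  abel

lemma gcomm_zsmul (r i : ℤ) (z : ℤ) (f : A →ₗ[K] A) (a : A) :
    gcomm r i (z • f) a = z • gcomm r i f a := by
  unfold gcomm; ext x
  simp only [LinearMap.sub_apply, LinearMap.comp_apply, LinearMap.smul_apply,
    LinearMap.mulLeft_apply, mul_smul_comm, smul_sub, smul_smul]
  rw [Int.mul_comm]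

lemma isDiff_add (𝒜 : ℤ → Submodule K A) : ∀ (n : ℕ) (r : ℤ) (f g : A →ₗ[K] A),
    IsDiff 𝒜 r n f → IsDiff 𝒜 r n g → IsDiff 𝒜 r n (f + g)
  | 0, r, f, g, hf, hg => by
      intro i a ha
      rw [gcomm_add, hf i a ha, hg i a ha, add_zero]
  | (n+1), r, f, g, hf, hg => by
      intro i a ha
      rw [gcomm_add]
      exact isDiff_add 𝒜 n _ _ _ (hf i a ha) (hg i a ha)

lemma isDiff_zsmul (𝒜 : ℤ → Submodule K A) : ∀ (n : ℕ) (r : ℤ) (z : ℤ) (f : A →ₗ[K] A),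
    IsDiff 𝒜 r n f → IsDiff 𝒜 r n (z • f)
  | 0, r, z, f, hf => by
      intro i a ha
      rw [gcomm_zsmul, hf i a ha, smul_zero]
  | (n+1), r, z, f, hf => by
      intro i a ha
      rw [gcomm_zsmul]
      exact isDiff_zsmul 𝒜 n _ z _ (hf i a ha)

/-! ### commuting with the differential -/

lemma gcomm_comm_d (𝒜 : ℤ → Submodule K A) (d : A →ₗ[K] A) (hder : IsGDer 𝒜 1 d)
    (r : ℤ) (f : A →ₗ[K] A) (i : ℤ) (a : A) (ha : a ∈ 𝒜 i) :
    gcomm (r+1) i (f ∘ₗ d - (r.negOnePow : ℤ) • (d ∘ₗ f)) a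
      = gcomm r (i+1) f (d a)
        + (i.negOnePow : ℤ) • ((gcomm r i f a) ∘ₗ d - ((r+i).negOnePow : ℤ) • (d ∘ₗ gcomm r i f a)) := by
  ext x
  simp only [gcomm, LinearMap.sub_apply, LinearMap.comp_apply, LinearMap.smul_apply,
    LinearMap.mulLeft_apply, LinearMap.add_apply, map_sub, map_zsmul]
  rw [hder i a ha x, hder i a ha (f x)]
  simp only [map_add, map_zsmul, mul_add, mul_sub, mul_smul_comm, smul_sub, smul_add, smul_smul]
  rcases Int.even_or_odd r with hr|hr <;> rcases Int.even_or_odd i with hi|hi <;>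
    simp [negOnePow_ite, parity_simps, hr, hi, ← Int.not_odd_iff_even, Int.odd_mul, odd_iff_false_of_even,
        even_iff_false_of_odd, odd_two_mul_iff, odd_two_int, smul_sub, smul_add,
      smul_smul] <;>
    abel

lemma isDiff_comm_d (𝒜 : ℤ → Submodule K A) (d : A →ₗ[K] A)
    (hddeg : HasDeg 𝒜 d 1) (hder : IsGDer 𝒜 1 d) :
    ∀ (n : ℕ) (r : ℤ) (f : A →ₗ[K] A), IsDiff 𝒜 r n f →
      IsDiff 𝒜 (r+1) n (f ∘ₗ d - (r.negOnePow : ℤ) • (d ∘ₗ f))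
  | 0, r, f, hf => by
      intro i a ha
      rw [gcomm_comm_d 𝒜 d hder r f i a ha, hf i a ha, hf (i+1) (d a) (hddeg i a ha)]
      simp only [LinearMap.zero_comp, LinearMap.comp_zero, smul_zero, sub_zero, sub_self,
        smul_zero, add_zero, zero_add]
  | (n+1), r, f, hf => by
      intro i a ha
      rw [gcomm_comm_d 𝒜 d hder r f i a ha]
      apply isDiff_add
      · have h := hf (i+1) (d a) (hddeg i a ha)
        rwa [show r + (i+1) = r + 1 + i by ring] at h
      · apply isDiff_zsmul
        have h := isDiff_comm_d 𝒜 d hddeg hder n (r+i) (gcomm r i f a) (hf i a ha)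
        rwa [show r + i + 1 = r + 1 + i by ring] at h

/-! ### koszulBr lemmas -/

lemma kB_congr {l : A →ₗ[K] A} {n n' : ℤ} (h : Even (n - n')) (x y : A) :
    koszulBr l n x y = koszulBr l n' x y := by
  have hs : (n.negOnePow : ℤ) = n'.negOnePow :=
    congrArg Units.val ((Int.negOnePow_eq_iff n n').mpr h)
  unfold koszulBr; rw [hs]

lemma kB_sub₂ (l : A →ₗ[K] A) (n : ℤ) (x y z : A) :
    koszulBr l n x (y - z) = koszulBr l n x y - koszulBr l n x z := by
  unfold koszulBr
  simp only [mul_sub, map_sub, sub_mul, smul_sub]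
  abel

lemma kB_zsmul₂ (l : A →ₗ[K] A) (n : ℤ) (w : ℤ) (x y : A) :
    koszulBr l n x (w • y) = w • koszulBr l n x y := by
  unfold koszulBr
  simp only [mul_smul_comm, map_zsmul, smul_sub, smul_smul]
  rw [Int.mul_comm]

/-- If moreover `l² = 0`, then `(A, d, ·, [,]_l, l)` is a
Batalin–Vilkovisky algebra. -/
theorem batalin_vilkovisky
    (𝒜 : ℤ → Submodule K A) (hA : IsGradedComm 𝒜)
    (d : A →ₗ[K] A) (hddeg : HasDeg 𝒜 d 1) (hder : IsGDer 𝒜 1 d) (hd2 : d ∘ₗ d = 0)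
    (k : ℤ) (bi : A →ₗ[K] A) (hbi : IsQuasiBV 𝒜 (-(2 * k)) bi)
    (l : A →ₗ[K] A) (hl : l = bi ∘ₗ d - d ∘ₗ bi)
    (hli : IsQuasiBV 𝒜 (-(4 * k) + 1) (l ∘ₗ bi - bi ∘ₗ l))
    (hl2 : l ∘ₗ l = 0) :
    -- `l` is an odd quasi-BV operator (degree `-2k+1`) squaring to zero:
    IsQuasiBV 𝒜 (-(2 * k) + 1) l ∧ Odd (-(2 * k) + 1) ∧ l ∘ₗ l = 0 ∧
    -- graded Poisson identity for the bracket generated by `l`: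
    (∀ i j m : ℤ, ∀ a ∈ 𝒜 i, ∀ b ∈ 𝒜 j, ∀ c ∈ 𝒜 m,
      koszulBr l i a (b * c)
        = koszulBr l i a b * c
          + (((i + (-(2 * k) + 1)) * j).negOnePow : ℤ) • (b * koszulBr l i a c)) ∧
    -- graded antisymmetry (in the degrees of `A[2k-1]`):
    (∀ i j : ℤ, ∀ a ∈ 𝒜 i, ∀ b ∈ 𝒜 j,
      koszulBr l i a b = -((((i + 1) * (j + 1)).negOnePow : ℤ) • koszulBr l j b a)) ∧
    -- graded Jacobi identity (in the degrees of `A[2k-1]`):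
    (∀ i j m : ℤ, ∀ a ∈ 𝒜 i, ∀ b ∈ 𝒜 j, ∀ c ∈ 𝒜 m,
      koszulBr l i a (koszulBr l j b c)
        = koszulBr l (i + j - 2 * k + 1) (koszulBr l i a b) c
          + (((i + 1) * (j + 1)).negOnePow : ℤ) • koszulBr l j b (koszulBr l i a c)) := by
  -- basic pieces
  have hd1 : d (1 : A) = 0 := by
    have h := hder 0 1 hA.2.1 1
    simpa using h
  have hl1 : l (1 : A) = 0 := by
    rw [hl]; simp [hd1, hbi.2.2]
  have hl2' : ∀ x : A, l (l x) = 0 := fun x => by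
    simpa using DFunLike.congr_fun hl2 (x : A)
  have hldeg : HasDeg 𝒜 l (-(2 * k) + 1) := by
    intro i a ha
    rw [hl]
    simp only [LinearMap.sub_apply, LinearMap.comp_apply]
    apply Submodule.sub_mem
    · have h := hbi.1 (i+1) (d a) (hddeg i a ha)
      rwa [show i + 1 + -(2*k) = i + (-(2*k)+1) by ring] at h
    · have h := hddeg (i + -(2*k)) (bi a) (hbi.1 i a ha)
      rwa [show i + -(2*k) + 1 = i + (-(2*k)+1) by ring] at h
  have hl2nd : IsDiff 𝒜 (-(2*k) + 1) 2 l := by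
    have h := isDiff_comm_d 𝒜 d hddeg hder 2 (-(2*k)) bi hbi.2.1
    have hneg : (((-(2*k) : ℤ)).negOnePow : ℤ) = 1 := by
      rw [Int.negOnePow_even _ ⟨-k, by ring⟩]; rfl
    rw [hneg, one_smul, ← hl] at h
    exact h
  -- the Poisson identity
  have hP : ∀ i j m : ℤ, ∀ a ∈ 𝒜 i, ∀ b ∈ 𝒜 j, ∀ c ∈ 𝒜 m,
      koszulBr l i a (b * c)
        = koszulBr l i a b * c
          + (((i + (-(2 * k) + 1)) * j).negOnePow : ℤ) • (b * koszulBr l i a c) := by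
    intro i j m a ha b hb c hc
    have h0 := hl2nd i a ha j b hb m c hc
    have E0 := DFunLike.congr_fun h0 1
    simp only [gcomm, LinearMap.sub_apply, LinearMap.comp_apply, LinearMap.smul_apply,
      LinearMap.mulLeft_apply, LinearMap.zero_apply, mul_one, hl1, mul_zero, smul_zero, sub_zero,
      mul_sub, mul_smul_comm, smul_sub, smul_smul] at E0
    have hmul := hA.2.2.1
    have hcomm := hA.2.2.2
    have hlab : l (a * b) ∈ 𝒜 (i + j + (-(2*k)+1)) := hldeg _ _ (hmul i j a ha b hb)
    have halb : a * l b ∈ 𝒜 (i + (j + (-(2*k)+1))) := hmul _ _ a ha _ (hldeg j b hb)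
    have hbla : b * l a ∈ 𝒜 (j + (i + (-(2*k)+1))) := hmul _ _ b hb _ (hldeg i a ha)
    have hc1 : c * l (a * b) = ((m * (i + j + (-(2*k)+1))).negOnePow : ℤ) • (l (a*b) * c) :=
      hcomm m _ c hc _ hlab
    have hc2 : c * (a * l b) = ((m * (i + (j + (-(2*k)+1)))).negOnePow : ℤ) • ((a * l b) * c) :=
      hcomm m _ c hc _ halb
    have hc3 : c * (b * l a) = ((m * (j + (i + (-(2*k)+1)))).negOnePow : ℤ) • ((b * l a) * c) :=
      hcomm m _ c hc _ hbla
    rw [hc1, hc2, hc3] at E0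
    simp only [smul_smul, mul_assoc] at E0
    rw [sub_sub, sub_sub] at E0
    have hsolve := sub_eq_zero.mp E0
    simp only [koszulBr, smul_sub, smul_smul, sub_mul, smul_mul_assoc, mul_assoc, mul_sub,
      mul_smul_comm]
    rw [hsolve]
    rcases Int.even_or_odd i with hi|hi <;> rcases Int.even_or_odd j with hj|hj <;>
      rcases Int.even_or_odd m with hm|hm <;>
      simp [negOnePow_ite, parity_simps, hi, hj, hm, ← Int.not_odd_iff_even, Int.odd_mul, odd_iff_false_of_even,
        even_iff_false_of_odd, odd_two_mul_iff, odd_two_int, even_two_mul,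
        smul_sub, smul_add, smul_smul] <;>
      abel
  -- antisymmetry
  have hAS : ∀ i j : ℤ, ∀ a ∈ 𝒜 i, ∀ b ∈ 𝒜 j,
      koszulBr l i a b = -((((i + 1) * (j + 1)).negOnePow : ℤ) • koszulBr l j b a) := by
    intro i j a ha b hb
    have hcomm := hA.2.2.2
    have h1 : a * b = ((i * j).negOnePow : ℤ) • (b * a) := hcomm i j a ha b hb
    have h2 : l a * b = (((i + (-(2*k)+1)) * j).negOnePow : ℤ) • (b * l a) :=
      hcomm _ j _ (hldeg i a ha) b hb
    have h3 : a * l b = ((i * (j + (-(2*k)+1))).negOnePow : ℤ) • (l b * a) :=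
      hcomm i _ a ha _ (hldeg j b hb)
    simp only [koszulBr, h1, h2, h3, map_zsmul, smul_sub, smul_smul, neg_sub, smul_neg, neg_neg]
    rcases Int.even_or_odd i with hi|hi <;> rcases Int.even_or_odd j with hj|hj <;>
      simp [negOnePow_ite, parity_simps, hi, hj, ← Int.not_odd_iff_even, Int.odd_mul, odd_iff_false_of_even,
        even_iff_false_of_odd, odd_two_mul_iff, odd_two_int, even_two_mul,
        smul_sub, smul_add, smul_smul] <;>
      abel
  -- Jacobi
  have hJ : ∀ i j m : ℤ, ∀ a ∈ 𝒜 i, ∀ b ∈ 𝒜 j, ∀ c ∈ 𝒜 m,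
      koszulBr l i a (koszulBr l j b c)
        = koszulBr l (i + j - 2 * k + 1) (koszulBr l i a b) c
          + (((i + 1) * (j + 1)).negOnePow : ℤ) • koszulBr l j b (koszulBr l i a c) := by
    have hE : ∀ (n : ℤ) (x y : A), l (koszulBr l n x y)
        = koszulBr l (n+1) (l x) y - (n.negOnePow : ℤ) • koszulBr l n x (l y) := by
      intro n x y
      simp only [koszulBr, map_sub, map_zsmul, hl2', smul_sub, smul_smul, zero_mul, mul_zero,
        sub_zero, smul_zero]
      rcases Int.even_or_odd n with hn|hn <;>
        simp [negOnePow_ite, parity_simps, hn, ← Int.not_odd_iff_even, Int.odd_mul, odd_iff_false_of_even,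
        even_iff_false_of_odd, odd_two_mul_iff, odd_two_int, smul_sub, smul_smul] <;>
        abel
    have hE' : ∀ (n : ℤ) (x y : A), koszulBr l n x (l y)
        = (n.negOnePow : ℤ) • (koszulBr l (n+1) (l x) y - l (koszulBr l n x y)) := by
      intro n x y
      simp only [koszulBr, map_sub, map_zsmul, hl2', smul_sub, smul_smul, zero_mul, mul_zero,
        sub_zero, smul_zero]
      rcases Int.even_or_odd n with hn|hn <;>
        simp [negOnePow_ite, parity_simps, hn, ← Int.not_odd_iff_even, Int.odd_mul, odd_iff_false_of_even,
        even_iff_false_of_odd, odd_two_mul_iff, odd_two_int, smul_sub, smul_smul] <;>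
        abel
    have hD : ∀ (n : ℤ) (u v : A), l (u * v)
        = (n.negOnePow : ℤ) • (koszulBr l n u v + u * l v) + l u * v := by
      intro n u v
      simp only [koszulBr, smul_add, smul_sub, smul_smul, negOnePow_sq, one_smul]
      abel
    intro i j m a ha b hb c hc
    have hla := hldeg i a ha
    have hlb := hldeg j b hb
    have hlc := hldeg m c hc
    have s1 : koszulBr l j b c
        = (j.negOnePow : ℤ) • l (b * c) - (j.negOnePow : ℤ) • (l b * c) - b * l c := by
      simp only [koszulBr, smul_sub]
    have s2 : koszulBr l i a (koszulBr l j b c)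
        = (j.negOnePow : ℤ) • koszulBr l i a (l (b * c))
          - (j.negOnePow : ℤ) • koszulBr l i a (l b * c) - koszulBr l i a (b * l c) := by
      rw [s1, kB_sub₂, kB_sub₂, kB_zsmul₂, kB_zsmul₂]
    have tA : koszulBr l i a (l (b * c))
        = (i.negOnePow : ℤ) • (koszulBr l (i+1) (l a) (b * c) - l (koszulBr l i a (b * c))) :=
      hE' i a (b * c)
    have tA1 : koszulBr l (i+1) (l a) (b * c)
        = koszulBr l (i + (-(2*k)+1)) (l a) (b * c) := kB_congr ⟨k, by ring⟩ _ _
    have tA2 : koszulBr l (i + (-(2*k)+1)) (l a) (b * c)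
        = koszulBr l (i + (-(2*k)+1)) (l a) b * c
          + (((i + (-(2*k)+1) + (-(2 * k) + 1)) * j).negOnePow : ℤ)
              • (b * koszulBr l (i + (-(2*k)+1)) (l a) c) :=
      hP (i + (-(2*k)+1)) j m (l a) hla b hb c hc
    have tP0 : koszulBr l i a (b * c)
        = koszulBr l i a b * c
          + (((i + (-(2 * k) + 1)) * j).negOnePow : ℤ) • (b * koszulBr l i a c) :=
      hP i j m a ha b hb c hc
    have tL : l (koszulBr l i a (b * c))
        = l (koszulBr l i a b * c)
          + (((i + (-(2 * k) + 1)) * j).negOnePow : ℤ) • l (b * koszulBr l i a c) := by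
      rw [tP0, map_add, map_zsmul]
    have tD1 : l (koszulBr l i a b * c)
        = ((i + j - 2 * k + 1).negOnePow : ℤ)
            • (koszulBr l (i + j - 2 * k + 1) (koszulBr l i a b) c + koszulBr l i a b * l c)
          + l (koszulBr l i a b) * c := hD (i + j - 2 * k + 1) _ c
    have tD2 : l (b * koszulBr l i a c)
        = (j.negOnePow : ℤ)
            • (koszulBr l j b (koszulBr l i a c) + b * l (koszulBr l i a c))
          + l b * koszulBr l i a c := hD j b _
    have tL1 : l (koszulBr l i a b)
        = koszulBr l (i+1) (l a) b - (i.negOnePow : ℤ) • koszulBr l i a (l b) := hE i a b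
    have tL2 : l (koszulBr l i a c)
        = koszulBr l (i+1) (l a) c - (i.negOnePow : ℤ) • koszulBr l i a (l c) := hE i a c
    have tB : koszulBr l i a (l b * c)
        = koszulBr l i a (l b) * c
          + (((i + (-(2 * k) + 1)) * (j + (-(2*k)+1))).negOnePow : ℤ)
              • (l b * koszulBr l i a c) :=
      hP i (j + (-(2*k)+1)) m a ha (l b) hlb c hc
    have tC : koszulBr l i a (b * l c)
        = koszulBr l i a b * l c
          + (((i + (-(2 * k) + 1)) * j).negOnePow : ℤ) • (b * koszulBr l i a (l c)) :=
      hP i j (m + (-(2*k)+1)) a ha b hb (l c) hlc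
    have tp1 : koszulBr l (i + (-(2*k)+1)) (l a) b = koszulBr l (i+1) (l a) b :=
      kB_congr ⟨-k, by ring⟩ _ _
    have tp2 : koszulBr l (i + (-(2*k)+1)) (l a) c = koszulBr l (i+1) (l a) c :=
      kB_congr ⟨-k, by ring⟩ _ _
    have hs1 : (((i + (-(2*k)+1) + (-(2 * k) + 1)) * j).negOnePow : ℤ)
        = ((i * j).negOnePow : ℤ) := by
      apply congrArg Units.val ((Int.negOnePow_eq_iff _ _).mpr ?_)
      exact ⟨(-(2*k)+1) * j, by ring⟩
    have hs2 : (((i + (-(2 * k) + 1)) * j).negOnePow : ℤ) = (((i+1) * j).negOnePow : ℤ) := by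
      apply congrArg Units.val ((Int.negOnePow_eq_iff _ _).mpr ?_)
      exact ⟨-(k*j), by ring⟩
    have hs3 : ((i + j - 2 * k + 1).negOnePow : ℤ) = ((i + j + 1).negOnePow : ℤ) := by
      apply congrArg Units.val ((Int.negOnePow_eq_iff _ _).mpr ?_)
      exact ⟨-k, by ring⟩
    have hs4 : (((i + (-(2 * k) + 1)) * (j + (-(2*k)+1))).negOnePow : ℤ)
        = (((i+1) * (j+1)).negOnePow : ℤ) := by
      apply congrArg Units.val ((Int.negOnePow_eq_iff _ _).mpr ?_)
      exact ⟨-(k*(i+j+2-2*k)), by ring⟩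
    rw [s2, tA, tA1, tA2, tL, tD1, tD2, tL1, tL2, tB, tC, tp1, tp2, hs1, hs2, hs3, hs4]
    simp only [sub_mul, add_mul, smul_mul_assoc, mul_sub, mul_add, mul_smul_comm, smul_sub,
      smul_add, smul_smul]
    rcases Int.even_or_odd i with hi|hi <;> rcases Int.even_or_odd j with hj|hj <;>
      simp [negOnePow_ite, parity_simps, hi, hj, ← Int.not_odd_iff_even, Int.odd_mul, odd_iff_false_of_even,
        even_iff_false_of_odd, odd_two_mul_iff, odd_two_int, even_two_mul,
        smul_sub, smul_add, smul_smul] <;>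
      abel
  exact ⟨⟨hldeg, hl2nd, hl1⟩, ⟨-k, by ring⟩, hl2, hP, hAS, hJ⟩
end
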